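/- arXiv:1609.05995 — 6 statements merged into one kernel-verified Lean document; each statement's English description precedes it below -/
import Mathlib

section
/- Let A be an n×n real matrix, B an m×m real matrix, x ∈ ℝⁿ, and λ ∈ ℝ. If A x = λ x and the entries of x sum to zero (1ₙᵀ x = 0), then (A ⋄ B)(x ⊗ 1ₘ) = m λ (x ⊗ 1ₘ), where 1ₖ denotes the all-ones vector of length k. -/
open Matrix Kronecker

/-- The `k × k` all-ones matrix `J_k`. -/
def onesMat (k : ℕ) : Matrix (Fin k) (Fin k) ℝ := Matrix.of fun _ _ => 1

/-- The additive Kronecker analogue `A ⋄ B = A ⊗ J_m + J_n ⊗ B`. -/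
def diamond {n m : ℕ} (A : Matrix (Fin n) (Fin n) ℝ) (B : Matrix (Fin m) (Fin m) ℝ) :
    Matrix (Fin n × Fin m) (Fin n × Fin m) ℝ :=
  A ⊗ₖ onesMat m + onesMat n ⊗ₖ B

/-- The Kronecker product of two vectors. -/
def vecKron {n m : ℕ} (x : Fin n → ℝ) (y : Fin m → ℝ) : Fin n × Fin m → ℝ :=
  fun p => x p.1 * y p.2

/-- The all-ones vector `1_k`. -/
def onesVec (k : ℕ) : Fin k → ℝ := fun _ => 1

/-! The theorem follows from `(A ⊗ C)(x ⊗ y) = Ax ⊗ Cy` applied to both summands of `A ⋄ B`: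
`J_m 1_m = m 1_m` turns the first into `m λ (x ⊗ 1_m)`, and `J_n x = (∑ xᵢ) 1_n = 0` kills
the second. -/

theorem kronecker_mulVec_vecKron {n n' m m' : ℕ} (A : Matrix (Fin n) (Fin n') ℝ)
    (C : Matrix (Fin m) (Fin m') ℝ) (x : Fin n' → ℝ) (y : Fin m' → ℝ) :
    (A ⊗ₖ C) *ᵥ vecKron x y = vecKron (A *ᵥ x) (C *ᵥ y) := by
  ext ⟨i, j⟩
  simp only [mulVec, dotProduct, vecKron, kronecker_apply, Fintype.sum_prod_type,
    Finset.sum_mul_sum]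
  exact Finset.sum_congr rfl fun _ _ => Finset.sum_congr rfl fun _ _ => by ring

theorem onesMat_mulVec {k : ℕ} (v : Fin k → ℝ) : onesMat k *ᵥ v = (∑ i, v i) • onesVec k := by
  ext i
  simp [onesMat, onesVec, mulVec, dotProduct]

theorem onesMat_mulVec_onesVec (k : ℕ) : onesMat k *ᵥ onesVec k = (k : ℝ) • onesVec k := by
  simp [onesMat_mulVec, onesVec]

theorem vecKron_smul_left {n m : ℕ} (a : ℝ) (x : Fin n → ℝ) (y : Fin m → ℝ) :
    vecKron (a • x) y = a • vecKron x y := by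
  ext p
  simp only [vecKron, Pi.smul_apply, smul_eq_mul, mul_assoc]

theorem vecKron_smul_right {n m : ℕ} (b : ℝ) (x : Fin n → ℝ) (y : Fin m → ℝ) :
    vecKron x (b • y) = b • vecKron x y := by
  ext p
  simp only [vecKron, Pi.smul_apply, smul_eq_mul, mul_left_comm]

theorem vecKron_zero_left {n m : ℕ} (y : Fin m → ℝ) : vecKron (0 : Fin n → ℝ) y = 0 := by
  ext p
  simp [vecKron]

/-- If `A x = λ x` and the entries of `x` sum to zero, then
`(A ⋄ B)(x ⊗ 1_m) = m λ (x ⊗ 1_m)`. -/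
theorem diamond_mulVec_vecKron_onesVec {n m : ℕ}
    (A : Matrix (Fin n) (Fin n) ℝ) (B : Matrix (Fin m) (Fin m) ℝ)
    (x : Fin n → ℝ) (lam : ℝ)
    (hAx : A.mulVec x = lam • x) (hx : ∑ i, x i = 0) :
    (diamond A B).mulVec (vecKron x (onesVec m)) =
      ((m : ℝ) * lam) • vecKron x (onesVec m) := by
  rw [diamond, add_mulVec, kronecker_mulVec_vecKron, kronecker_mulVec_vecKron, hAx,
    onesMat_mulVec_onesVec, onesMat_mulVec x, hx, zero_smul, vecKron_zero_left, add_zero,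
    vecKron_smul_left, vecKron_smul_right, smul_smul, mul_comm]
end

section
/- Let G and H be connected simple graphs on n and m vertices respectively whose distance matrices D(G) and D(H) each have constant row sums. Then (a) n₋(D(G □ H)) ≥ n₋(D(G)) + n₋(D(H)), and (b) n₊(D(G □ H)) ≥ 1 + (n₊(D(G)) − 1) + (n₊(D(H)) − 1). -/
open Matrix Module Finset

namespace InertiaAux
set_option linter.unusedSectionVars false
variable {ι : Type*} [Fintype ι] [DecidableEq ι]

lemma dot_sum {κ : Type*} (s : Finset κ) (x : ι → ℝ) (f : κ → ι → ℝ) :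
    x ⬝ᵥ (∑ i ∈ s, f i) = ∑ i ∈ s, x ⬝ᵥ f i := by
  simp only [dotProduct, Finset.sum_apply, Finset.mul_sum]
  rw [Finset.sum_comm]

lemma sum_dot {κ : Type*} (s : Finset κ) (x : ι → ℝ) (f : κ → ι → ℝ) :
    (∑ i ∈ s, f i) ⬝ᵥ x = ∑ i ∈ s, f i ⬝ᵥ x := by
  simp only [dotProduct, Finset.sum_apply, Finset.sum_mul]
  rw [Finset.sum_comm]

lemma mulVec_sum' {κ : Type*} (s : Finset κ) (M : Matrix ι ι ℝ) (f : κ → ι → ℝ) :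
    M *ᵥ (∑ i ∈ s, f i) = ∑ i ∈ s, M *ᵥ f i := by
  rw [← mulVecLin_apply, map_sum]
  simp [mulVecLin_apply]

variable {M : Matrix ι ι ℝ}

/-- eigenvectors as plain functions -/
noncomputable def evec (hM : M.IsHermitian) (i : ι) : ι → ℝ := ⇑(hM.eigenvectorBasis i)

lemma evec_dot (hM : M.IsHermitian) (i j : ι) :
    evec hM i ⬝ᵥ evec hM j = if i = j then 1 else 0 := by
  have h := hM.eigenvectorBasis.orthonormal
  rw [orthonormal_iff_ite] at h
  have := h i j
  rw [← this]
  simp [evec, PiLp.inner_apply, dotProduct, mul_comm]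

lemma mulVec_evec (hM : M.IsHermitian) (j : ι) :
    M *ᵥ evec hM j = hM.eigenvalues j • evec hM j :=
  hM.mulVec_eigenvectorBasis j

lemma evec_li (hM : M.IsHermitian) : LinearIndependent ℝ (evec hM) := by
  rw [linearIndependent_iff']
  intro s g h i hi
  have h2 := congrArg (fun z => evec hM i ⬝ᵥ z) h
  simp only [dot_sum, dotProduct_smul, evec_dot, smul_eq_mul, mul_ite, mul_one, mul_zero,
    dotProduct_zero, Finset.sum_ite_eq' s] at h2
  simpa [hi] using h2

lemma expand (hM : M.IsHermitian) [Nonempty ι] (x : ι → ℝ) :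
    x = ∑ i, (evec hM i ⬝ᵥ x) • evec hM i := by
  classical
  let b : Basis ι ℝ (ι → ℝ) := basisOfLinearIndependentOfCardEqFinrank (evec_li hM)
    (by simp [Module.finrank_fintype_fun_eq_card])
  have hb : ∀ i, b i = evec hM i := fun i =>
    congrFun (coe_basisOfLinearIndependentOfCardEqFinrank _ _) i
  have hx : x = ∑ i, b.repr x i • evec hM i := by
    conv_lhs => rw [← b.sum_repr x]
    exact Finset.sum_congr rfl fun i _ => by rw [hb]
  have hc : ∀ j, evec hM j ⬝ᵥ x = b.repr x j := by
    intro j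
    conv_lhs => rw [hx]
    simp only [dot_sum, dotProduct_smul, evec_dot, smul_eq_mul, mul_ite, mul_one, mul_zero]
    simp
  conv_lhs => rw [hx]
  exact Finset.sum_congr rfl fun i _ => by rw [hc]

lemma quad_eq (hM : M.IsHermitian) [Nonempty ι] (x : ι → ℝ) :
    x ⬝ᵥ M *ᵥ x = ∑ i, hM.eigenvalues i * (evec hM i ⬝ᵥ x) ^ 2 := by
  have hMx : M *ᵥ x = ∑ i, ((evec hM i ⬝ᵥ x) * hM.eigenvalues i) • evec hM i := by
    conv_lhs => rw [expand hM x]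
    rw [mulVec_sum']
    exact Finset.sum_congr rfl fun i _ => by rw [mulVec_smul, mulVec_evec, smul_smul]
  rw [hMx, dot_sum]
  refine Finset.sum_congr rfl fun i _ => ?_
  rw [dotProduct_smul, smul_eq_mul, dotProduct_comm]
  ring


/-- key bound: a subspace on which the form is ε-definite has dim ≤ #{i | p i},
provided eigenvalues outside p are ε-nonpositive. -/
lemma finrank_le_card_filter (hM : M.IsHermitian) [Nonempty ι] (ε : ℝ)
    (p : ι → Prop) [DecidablePred p]
    (hp : ∀ i, ¬ p i → ε * hM.eigenvalues i ≤ 0)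
    (U : Submodule ℝ (ι → ℝ))
    (hU : ∀ x ∈ U, x ≠ 0 → 0 < ε * (x ⬝ᵥ M *ᵥ x)) :
    Module.finrank ℝ U ≤ (Finset.univ.filter p).card := by
  classical
  -- the "coordinate" linear map to the p-indices
  let Φ : (ι → ℝ) →ₗ[ℝ] ({i // p i} → ℝ) :=
    { toFun := fun x j => evec hM j.1 ⬝ᵥ x
      map_add' := fun a b => by funext j; simp [dotProduct_add]
      map_smul' := fun c a => by funext j; simp [dotProduct_smul] }
  let P := LinearMap.ker Φ
  have hinf : U ⊓ P = ⊥ := by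
    rw [Submodule.eq_bot_iff]
    rintro x ⟨hxU, hxP⟩
    by_contra hx0
    have h1 := hU x hxU hx0
    have hcoord : ∀ j, p j → evec hM j ⬝ᵥ x = 0 := fun j hj =>
      congrFun (LinearMap.mem_ker.1 hxP) ⟨j, hj⟩
    have h2 : ε * (x ⬝ᵥ M *ᵥ x) ≤ 0 := by
      rw [quad_eq hM x, Finset.mul_sum]
      refine Finset.sum_nonpos fun i _ => ?_
      by_cases hpi : p i
      · simp [hcoord i hpi]
      · rw [show ε * (hM.eigenvalues i * (evec hM i ⬝ᵥ x) ^ 2)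
            = (ε * hM.eigenvalues i) * (evec hM i ⬝ᵥ x) ^ 2 by ring]
        exact mul_nonpos_of_nonpos_of_nonneg (hp i hpi) (sq_nonneg _)
    linarith
  have hcard : Fintype.card ι = Module.finrank ℝ (ι → ℝ) :=
    (Module.finrank_fintype_fun_eq_card ℝ).symm
  have hP : Fintype.card ι ≤ Module.finrank ℝ P + (Finset.univ.filter p).card := by
    have h3 := LinearMap.finrank_range_add_finrank_ker Φ
    have h4 : Module.finrank ℝ (LinearMap.range Φ) ≤ Fintype.card {i // p i} := by
      calc Module.finrank ℝ (LinearMap.range Φ) ≤ Module.finrank ℝ ({i // p i} → ℝ) :=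
            (LinearMap.range Φ).finrank_le
        _ = Fintype.card {i // p i} := Module.finrank_fintype_fun_eq_card ℝ
    rw [Fintype.card_subtype] at h4
    have he : (Finset.univ.filter fun x => p x) = Finset.univ.filter p := rfl
    rw [he] at h4
    have h5 : Module.finrank ℝ P = Module.finrank ℝ (LinearMap.ker Φ) := rfl
    rw [← hcard] at h3
    omega
  have hsup := Submodule.finrank_sup_add_finrank_inf_eq U P
  rw [hinf] at hsup
  have hle : Module.finrank ℝ ↥(U ⊔ P) ≤ Fintype.card ι := by
    rw [hcard]; exact Submodule.finrank_le _
  simp only [finrank_bot, add_zero] at hsup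
  omega

/-- span of the eigenvectors with indices satisfying `p`. -/
noncomputable def spanPart (hM : M.IsHermitian) (p : ι → Prop) : Submodule ℝ (ι → ℝ) :=
  Submodule.span ℝ (Set.range fun i : {i // p i} => evec hM i)

lemma finrank_spanPart (hM : M.IsHermitian) (p : ι → Prop) [DecidablePred p] :
    Module.finrank ℝ (spanPart hM p) = (Finset.univ.filter p).card := by
  have hli : LinearIndependent ℝ (fun i : {i // p i} => evec hM i.1) :=
    (evec_li hM).comp _ Subtype.val_injective
  rw [spanPart, finrank_span_eq_card hli, Fintype.card_subtype]

lemma spanPart_dot_eq_zero (hM : M.IsHermitian) (p : ι → Prop) {x : ι → ℝ}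
    (hx : x ∈ spanPart hM p) {j : ι} (hj : ¬ p j) : evec hM j ⬝ᵥ x = 0 := by
  induction hx using Submodule.span_induction with
  | mem z hz =>
    obtain ⟨i, rfl⟩ := hz
    rw [evec_dot]
    simp only [ite_eq_right_iff]
    intro h; exact absurd (h ▸ i.2) hj
  | zero => simp
  | add a b _ _ ha hb => rw [dotProduct_add, ha, hb, add_zero]
  | smul c a _ ha => rw [dotProduct_smul, ha, smul_zero]

lemma spanPart_linfun_eq_zero (hM : M.IsHermitian) (p : ι → Prop) {x : ι → ℝ}
    (hx : x ∈ spanPart hM p) (f : (ι → ℝ) →ₗ[ℝ] ℝ)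
    (hf : ∀ i, p i → f (evec hM i) = 0) : f x = 0 := by
  induction hx using Submodule.span_induction with
  | mem z hz => obtain ⟨i, rfl⟩ := hz; exact hf i.1 i.2
  | zero => simp
  | add a b _ _ ha hb => rw [map_add, ha, hb, add_zero]
  | smul c a _ ha => rw [f.map_smul, ha, smul_zero]

lemma spanPart_quad (hM : M.IsHermitian) [Nonempty ι] (ε : ℝ) (p : ι → Prop) [DecidablePred p]
    (hp : ∀ i, p i → 0 < ε * hM.eigenvalues i) {x : ι → ℝ}
    (hx : x ∈ spanPart hM p) (hx0 : x ≠ 0) : 0 < ε * (x ⬝ᵥ M *ᵥ x) := by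
  rw [quad_eq hM x, Finset.mul_sum]
  have hnn : ∀ i ∈ Finset.univ, (0:ℝ) ≤ ε * (hM.eigenvalues i * (evec hM i ⬝ᵥ x) ^ 2) := by
    intro i _
    by_cases hpi : p i
    · rw [show ε * (hM.eigenvalues i * (evec hM i ⬝ᵥ x) ^ 2)
          = (ε * hM.eigenvalues i) * (evec hM i ⬝ᵥ x) ^ 2 by ring]
      exact mul_nonneg (hp i hpi).le (sq_nonneg _)
    · simp [spanPart_dot_eq_zero hM p hx hpi]
  have hex : ∃ j ∈ Finset.univ, (0:ℝ) < ε * (hM.eigenvalues j * (evec hM j ⬝ᵥ x) ^ 2) := by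
    by_contra hc
    push_neg at hc
    apply hx0
    have hall : ∀ j, evec hM j ⬝ᵥ x = 0 := by
      intro j
      by_cases hpj : p j
      · by_contra hj0
        have := hp j hpj
        have h5 : 0 < ε * (hM.eigenvalues j * (evec hM j ⬝ᵥ x) ^ 2) := by
          rw [show ε * (hM.eigenvalues j * (evec hM j ⬝ᵥ x) ^ 2)
              = (ε * hM.eigenvalues j) * (evec hM j ⬝ᵥ x) ^ 2 by ring]
          exact mul_pos this (by positivity)
        exact absurd h5 (not_lt.2 (hc j (Finset.mem_univ j)))
      · exact spanPart_dot_eq_zero hM p hx hpj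
    rw [expand hM x]
    simp [hall]
  exact Finset.sum_pos' hnn hex

/-- the coordinate-sum functional -/
def sumF : (ι → ℝ) →ₗ[ℝ] ℝ :=
  { toFun := fun x => ∑ i, x i
    map_add' := fun a b => by simp [Finset.sum_add_distrib]
    map_smul' := fun c a => by simp [Finset.mul_sum] }

lemma sumF_apply (x : ι → ℝ) : sumF x = ∑ i, x i := rfl

/-- for a symmetric matrix with constant row sums, summing `M *ᵥ x` multiplies the sum by ρ -/
lemma sum_mulVec {ρ : ℝ} (hM : M.IsHermitian) (hρ : ∀ u, ∑ v, M u v = ρ) (x : ι → ℝ) :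
    ∑ u, (M *ᵥ x) u = ρ * ∑ u, x u := by
  have hsym : ∀ u v, M u v = M v u := fun u v => by
    conv_lhs => rw [← hM.eq]
    simp [Matrix.conjTranspose_apply]
  calc ∑ u, (M *ᵥ x) u = ∑ u, ∑ v, M u v * x v := rfl
    _ = ∑ v, (∑ u, M v u) * x v := by
        rw [Finset.sum_comm]
        exact Finset.sum_congr rfl fun v _ => by
          rw [Finset.sum_mul]
          exact Finset.sum_congr rfl fun u _ => by rw [hsym u v]
    _ = ∑ v, ρ * x v := Finset.sum_congr rfl fun v _ => by rw [hρ v]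
    _ = ρ * ∑ v, x v := by rw [Finset.mul_sum]

/-- eigenvector for an eigenvalue different from the constant row sum has zero coordinate sum -/
lemma sum_eigvec_eq_zero {ρ μ : ℝ} (hM : M.IsHermitian) (hρ : ∀ u, ∑ v, M u v = ρ)
    {x : ι → ℝ} (hx : M *ᵥ x = μ • x) (hμ : μ ≠ ρ) : ∑ u, x u = 0 := by
  have h1 : μ * ∑ u, x u = ρ * ∑ u, x u := by
    rw [← sum_mulVec hM hρ x, hx]
    simp [Finset.mul_sum]
  rcases mul_eq_mul_right_iff.1 h1 with h | h
  · exact absurd h hμ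
  · exact h

/-- cutting a subspace with a hyperplane loses at most one dimension -/
lemma finrank_inf_ker {X : Type*} [AddCommGroup X] [Module ℝ X] [FiniteDimensional ℝ X]
    (A : Submodule ℝ X) (f : X →ₗ[ℝ] ℝ) :
    Module.finrank ℝ A ≤ Module.finrank ℝ ↥(A ⊓ LinearMap.ker f) + 1 := by
  have h1 := Submodule.finrank_sup_add_finrank_inf_eq A (LinearMap.ker f)
  have h2 := LinearMap.finrank_range_add_finrank_ker f
  have h3 : Module.finrank ℝ ↥(LinearMap.range f) ≤ 1 := by
    calc Module.finrank ℝ ↥(LinearMap.range f) ≤ Module.finrank ℝ ℝ := Submodule.finrank_le _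
      _ = 1 := Module.finrank_self ℝ
  have h4 : Module.finrank ℝ ↥(A ⊔ LinearMap.ker f) ≤ Module.finrank ℝ X :=
    Submodule.finrank_le _
  have h5 : Module.finrank ℝ ↥(LinearMap.ker f) ≤ Module.finrank ℝ X :=
    Submodule.finrank_le _
  omega

section Prod
variable {κ : Type*} [Fintype κ] [DecidableEq κ]

/-- extend a function on `ι` to `ι × κ` via the first coordinate -/
def L1 : (ι → ℝ) →ₗ[ℝ] (ι × κ → ℝ) :=
  { toFun := fun x p => x p.1, map_add' := fun _ _ => rfl, map_smul' := fun _ _ => rfl }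

/-- extend a function on `κ` to `ι × κ` via the second coordinate -/
def L2 : (κ → ℝ) →ₗ[ℝ] (ι × κ → ℝ) :=
  { toFun := fun y p => y p.2, map_add' := fun _ _ => rfl, map_smul' := fun _ _ => rfl }

lemma L1_apply (x : ι → ℝ) (p : ι × κ) : L1 x p = x p.1 := rfl
lemma L2_apply (y : κ → ℝ) (p : ι × κ) : L2 y p = y p.2 := rfl

/-- the all-ones vector on the product -/
def c1 : ι × κ → ℝ := fun _ => 1

lemma dL11 (u v : ι → ℝ) : (L1 u : ι × κ → ℝ) ⬝ᵥ L1 v = (Fintype.card κ : ℝ) * (u ⬝ᵥ v) := by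
  simp only [dotProduct, L1_apply, Fintype.sum_prod_type, Finset.sum_const, Finset.card_univ,
    nsmul_eq_mul, Finset.mul_sum]

lemma dL22 (u v : κ → ℝ) : (L2 u : ι × κ → ℝ) ⬝ᵥ L2 v = (Fintype.card ι : ℝ) * (u ⬝ᵥ v) := by
  simp [dotProduct, L2_apply, Fintype.sum_prod_type, Finset.sum_const, Finset.card_univ,
    Finset.mul_sum]

lemma dL12 (u : ι → ℝ) (v : κ → ℝ) : (L1 u : ι × κ → ℝ) ⬝ᵥ L2 v = (∑ a, u a) * (∑ b, v b) := by
  simp [dotProduct, L1_apply, L2_apply, Fintype.sum_prod_type, Finset.sum_mul_sum]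

lemma dL21 (u : κ → ℝ) (v : ι → ℝ) : (L2 u : ι × κ → ℝ) ⬝ᵥ L1 v = (∑ a, v a) * (∑ b, u b) := by
  rw [dotProduct_comm, dL12]

lemma dL1c (u : ι → ℝ) : (L1 u : ι × κ → ℝ) ⬝ᵥ c1 = (Fintype.card κ : ℝ) * ∑ a, u a := by
  simp [dotProduct, L1_apply, c1, Fintype.sum_prod_type, Finset.sum_const, Finset.card_univ,
    Finset.mul_sum, Finset.sum_mul, mul_comm]

lemma dL2c (u : κ → ℝ) : (L2 u : ι × κ → ℝ) ⬝ᵥ c1 = (Fintype.card ι : ℝ) * ∑ b, u b := by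
  simp [dotProduct, L2_apply, c1, Fintype.sum_prod_type, Finset.sum_const, Finset.card_univ,
    Finset.mul_sum, mul_comm]

lemma dcc : (c1 : ι × κ → ℝ) ⬝ᵥ c1 = (Fintype.card ι : ℝ) * (Fintype.card κ : ℝ) := by
  simp [dotProduct, c1, Fintype.sum_prod_type, Finset.sum_const, Finset.card_univ]

variable {A : Matrix ι ι ℝ} {B : Matrix κ κ ℝ} {D : Matrix (ι × κ) (ι × κ) ℝ} {ρA ρB : ℝ}

lemma mulVec_L1 (hD : ∀ (a c : ι) (b d : κ), D (a,b) (c,d) = A a c + B b d)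
    (hB : ∀ u, ∑ v, B u v = ρB) {x : ι → ℝ} (hx : ∑ a, x a = 0) :
    D *ᵥ L1 x = L1 ((Fintype.card κ : ℝ) • (A *ᵥ x)) := by
  funext p
  obtain ⟨a, b⟩ := p
  show ∑ q : ι × κ, D (a,b) q * x q.1 = (Fintype.card κ : ℝ) * ∑ c, A a c * x c
  rw [Fintype.sum_prod_type]
  have : ∀ c, ∑ d, D (a,b) (c,d) * x c
      = (Fintype.card κ : ℝ) * (A a c * x c) + ρB * x c := by
    intro c
    simp only [hD]
    have h6 : ∀ d : κ, (A a c + B b d) * x c = A a c * x c + B b d * x c := fun d => by ring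
    rw [Finset.sum_congr rfl fun d _ => h6 d, Finset.sum_add_distrib, Finset.sum_const,
      Finset.card_univ, ← Finset.sum_mul, hB]
    simp [mul_comm]
  rw [Finset.sum_congr rfl fun c _ => this c, Finset.sum_add_distrib, ← Finset.mul_sum,
    ← Finset.mul_sum, hx]
  simp

lemma mulVec_L2 (hD : ∀ (a c : ι) (b d : κ), D (a,b) (c,d) = A a c + B b d)
    (hA : ∀ u, ∑ v, A u v = ρA) {y : κ → ℝ} (hy : ∑ b, y b = 0) :
    D *ᵥ L2 y = L2 ((Fintype.card ι : ℝ) • (B *ᵥ y)) := by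
  funext p
  obtain ⟨a, b⟩ := p
  show ∑ q : ι × κ, D (a,b) q * y q.2 = (Fintype.card ι : ℝ) * ∑ d, B b d * y d
  rw [Fintype.sum_prod_type]
  have : ∀ c, ∑ d, D (a,b) (c,d) * y d
      = A a c * ∑ d, y d + ∑ d, B b d * y d := by
    intro c
    simp only [hD]
    rw [Finset.sum_congr rfl fun d _ => show (A a c + B b d) * y d = A a c * y d + B b d * y d
      by ring]
    rw [Finset.sum_add_distrib, Finset.mul_sum]
  rw [Finset.sum_congr rfl fun c _ => this c, Finset.sum_add_distrib, hy]
  simp [Finset.sum_const, Finset.card_univ]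

lemma mulVec_c1 (hD : ∀ (a c : ι) (b d : κ), D (a,b) (c,d) = A a c + B b d)
    (hA : ∀ u, ∑ v, A u v = ρA) (hB : ∀ u, ∑ v, B u v = ρB) :
    D *ᵥ c1 = ((Fintype.card κ : ℝ) * ρA + (Fintype.card ι : ℝ) * ρB) • (c1 : ι × κ → ℝ) := by
  funext p
  obtain ⟨a, b⟩ := p
  show ∑ q : ι × κ, D (a,b) q * 1 = ((Fintype.card κ : ℝ) * ρA + (Fintype.card ι : ℝ) * ρB) * 1
  rw [Fintype.sum_prod_type]
  simp only [hD, mul_one]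
  rw [Finset.sum_congr rfl fun c _ => by
    rw [Finset.sum_add_distrib, Finset.sum_const, Finset.card_univ, hB]]
  rw [Finset.sum_add_distrib, ← Finset.smul_sum, hA]
  simp [Finset.sum_const, Finset.card_univ]

lemma quad_decomp (hD : ∀ (a c : ι) (b d : κ), D (a,b) (c,d) = A a c + B b d)
    (hAH : A.IsHermitian) (hBH : B.IsHermitian)
    (hA : ∀ u, ∑ v, A u v = ρA) (hB : ∀ u, ∑ v, B u v = ρB)
    {x : ι → ℝ} {y : κ → ℝ} (hx : ∑ a, x a = 0) (hy : ∑ b, y b = 0) (t : ℝ) :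
    (L1 x + L2 y + t • c1) ⬝ᵥ D *ᵥ (L1 x + L2 y + t • c1) =
      (Fintype.card κ : ℝ) ^ 2 * (x ⬝ᵥ A *ᵥ x) + (Fintype.card ι : ℝ) ^ 2 * (y ⬝ᵥ B *ᵥ y)
        + t ^ 2 * (((Fintype.card κ : ℝ) * ρA + (Fintype.card ι : ℝ) * ρB)
            * ((Fintype.card ι : ℝ) * (Fintype.card κ : ℝ))) := by
  set n : ℝ := (Fintype.card ι : ℝ)
  set m : ℝ := (Fintype.card κ : ℝ)
  have hAx : ∑ u, (A *ᵥ x) u = 0 := by rw [sum_mulVec hAH hA, hx, mul_zero]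
  have hBy : ∑ u, (B *ᵥ y) u = 0 := by rw [sum_mulVec hBH hB, hy, mul_zero]
  have hDz : D *ᵥ (L1 x + L2 y + t • c1)
      = L1 (m • (A *ᵥ x)) + L2 (n • (B *ᵥ y)) + (t * (m * ρA + n * ρB)) • c1 := by
    rw [mulVec_add, mulVec_add, mulVec_smul, mulVec_L1 hD hB hx, mulVec_L2 hD hA hy,
      mulVec_c1 hD hA hB, smul_smul]
  rw [hDz]
  simp only [add_dotProduct, dotProduct_add, smul_dotProduct, dotProduct_smul,
    dL11, dL22, dL12, dL21, dL1c, dL2c, dcc, _root_.map_smul]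
  have hcL1 : ∀ u : ι → ℝ, (c1 : ι × κ → ℝ) ⬝ᵥ L1 u = m * ∑ a, u a := fun u => by
    rw [dotProduct_comm, dL1c]
  have hcL2 : ∀ u : κ → ℝ, (c1 : ι × κ → ℝ) ⬝ᵥ L2 u = n * ∑ b, u b := fun u => by
    rw [dotProduct_comm, dL2c]
  simp only [hcL1, hcL2, smul_eq_mul, hx, hy, hAx, hBy, mul_zero, zero_mul, add_zero, zero_add]
  simp only [n, m]
  ring_nf

variable [Nonempty ι] [Nonempty κ]

lemma L1_injective : Function.Injective (L1 : (ι → ℝ) →ₗ[ℝ] (ι × κ → ℝ)) := by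
  intro a b h
  obtain ⟨b0⟩ := ‹Nonempty κ›
  funext i
  exact congrFun h (i, b0)

lemma L2_injective : Function.Injective (L2 : (κ → ℝ) →ₗ[ℝ] (ι × κ → ℝ)) := by
  intro a b h
  obtain ⟨a0⟩ := ‹Nonempty ι›
  funext j
  exact congrFun h (a0, j)

lemma inf_map_eq_bot (UG : Submodule ℝ (ι → ℝ)) (UH : Submodule ℝ (κ → ℝ))
    (hUG : ∀ x ∈ UG, ∑ a, x a = 0) :
    (UG.map (L1 : (ι → ℝ) →ₗ[ℝ] (ι × κ → ℝ))) ⊓ (UH.map L2) = ⊥ := by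
  rw [Submodule.eq_bot_iff]
  rintro z hz
  rw [Submodule.mem_inf] at hz
  obtain ⟨⟨x, hx, rfl⟩, ⟨y, hy, hxy⟩⟩ := hz
  obtain ⟨b0⟩ := ‹Nonempty κ›
  have hconst : ∀ i : ι, x i = y b0 := fun i => (congrFun hxy (i, b0)).symm
  have hsum := hUG x hx
  rw [Finset.sum_congr rfl fun i _ => hconst i, Finset.sum_const, Finset.card_univ,
    nsmul_eq_mul] at hsum
  have hcard : (Fintype.card ι : ℝ) ≠ 0 := Nat.cast_ne_zero.mpr Fintype.card_ne_zero
  have hb0 : y b0 = 0 := by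
    rcases mul_eq_zero.1 hsum with h | h
    · exact absurd h hcard
    · exact h
  have hx0 : x = 0 := funext fun i => by rw [hconst i, hb0]; simp
  rw [hx0, map_zero]

lemma finrank_map_L1 (UG : Submodule ℝ (ι → ℝ)) :
    Module.finrank ℝ ↥(UG.map (L1 : (ι → ℝ) →ₗ[ℝ] (ι × κ → ℝ))) = Module.finrank ℝ ↥UG :=
  ((Submodule.equivMapOfInjective _ L1_injective UG).finrank_eq).symm

lemma finrank_map_L2 (UH : Submodule ℝ (κ → ℝ)) :
    Module.finrank ℝ ↥(UH.map (L2 : (κ → ℝ) →ₗ[ℝ] (ι × κ → ℝ))) = Module.finrank ℝ ↥UH :=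
  ((Submodule.equivMapOfInjective _ L2_injective UH).finrank_eq).symm

lemma finrank_sup2 (UG : Submodule ℝ (ι → ℝ)) (UH : Submodule ℝ (κ → ℝ))
    (hUG : ∀ x ∈ UG, ∑ a, x a = 0) :
    Module.finrank ℝ ↥(UG.map (L1 : (ι → ℝ) →ₗ[ℝ] (ι × κ → ℝ)) ⊔ UH.map L2)
      = Module.finrank ℝ ↥UG + Module.finrank ℝ ↥UH := by
  have h := Submodule.finrank_sup_add_finrank_inf_eq (UG.map (L1 : (ι → ℝ) →ₗ[ℝ] (ι × κ → ℝ)))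
    (UH.map L2)
  rw [inf_map_eq_bot UG UH hUG, finrank_bot, add_zero, finrank_map_L1, finrank_map_L2] at h
  exact h

lemma sup_inf_c1_eq_bot (UG : Submodule ℝ (ι → ℝ)) (UH : Submodule ℝ (κ → ℝ))
    (hUG : ∀ x ∈ UG, ∑ a, x a = 0) (hUH : ∀ y ∈ UH, ∑ b, y b = 0) :
    (UG.map (L1 : (ι → ℝ) →ₗ[ℝ] (ι × κ → ℝ)) ⊔ UH.map L2) ⊓ (ℝ ∙ (c1 : ι × κ → ℝ)) = ⊥ := by
  rw [Submodule.eq_bot_iff]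
  rintro z hz
  rw [Submodule.mem_inf] at hz
  obtain ⟨hz1, hz2⟩ := hz
  rw [Submodule.mem_sup] at hz1
  obtain ⟨u, ⟨x, hx, rfl⟩, v, ⟨y, hy, rfl⟩, hz⟩ := hz1
  rw [Submodule.mem_span_singleton] at hz2
  obtain ⟨t, ht⟩ := hz2
  have h1 : ∑ p : ι × κ, x p.1 = (Fintype.card κ : ℝ) * ∑ a, x a := by
    rw [Fintype.sum_prod_type]
    simp [Finset.sum_const, Finset.card_univ, Finset.mul_sum, Finset.sum_mul, mul_comm]
  have h2 : ∑ p : ι × κ, y p.2 = (Fintype.card ι : ℝ) * ∑ b, y b := by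
    rw [Fintype.sum_prod_type]
    simp [Finset.sum_const, Finset.card_univ, Finset.mul_sum]
  have hsum : ∑ p : ι × κ, z p = 0 := by
    rw [← hz]
    show ∑ p : ι × κ, (x p.1 + y p.2) = 0
    rw [Finset.sum_add_distrib, h1, h2, hUG x hx, hUH y hy, mul_zero, mul_zero, add_zero]
  have hts : ∑ p : ι × κ, (t • (c1 : ι × κ → ℝ)) p
      = t * ((Fintype.card ι : ℝ) * (Fintype.card κ : ℝ)) := by
    simp [c1, Finset.sum_const, Finset.card_univ, Fintype.card_prod]
    ring
  rw [← ht, hts] at hsum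
  have hN : ((Fintype.card ι : ℝ) * (Fintype.card κ : ℝ)) ≠ 0 :=
    mul_ne_zero (Nat.cast_ne_zero.mpr Fintype.card_ne_zero)
      (Nat.cast_ne_zero.mpr Fintype.card_ne_zero)
  have ht0 : t = 0 := by
    rcases mul_eq_zero.1 hsum with h | h
    · exact h
    · exact absurd h hN
  rw [← ht, ht0, zero_smul]

lemma finrank_sup3 (UG : Submodule ℝ (ι → ℝ)) (UH : Submodule ℝ (κ → ℝ))
    (hUG : ∀ x ∈ UG, ∑ a, x a = 0) (hUH : ∀ y ∈ UH, ∑ b, y b = 0) :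
    Module.finrank ℝ ↥(UG.map (L1 : (ι → ℝ) →ₗ[ℝ] (ι × κ → ℝ)) ⊔ UH.map L2 ⊔ (ℝ ∙ (c1 : ι × κ → ℝ)))
      = Module.finrank ℝ ↥UG + Module.finrank ℝ ↥UH + 1 := by
  have h := Submodule.finrank_sup_add_finrank_inf_eq
    (UG.map (L1 : (ι → ℝ) →ₗ[ℝ] (ι × κ → ℝ)) ⊔ UH.map L2) (ℝ ∙ (c1 : ι × κ → ℝ))
  rw [sup_inf_c1_eq_bot UG UH hUG hUH, finrank_bot, add_zero, finrank_sup2 UG UH hUG] at h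
  rw [h, finrank_span_singleton]
  intro hc
  obtain ⟨a0⟩ := ‹Nonempty ι›
  obtain ⟨b0⟩ := ‹Nonempty κ›
  exact one_ne_zero (congrFun hc (a0, b0))

end Prod

end InertiaAux


lemma walk_len_ge {V W : Type*} {G : SimpleGraph V} {H : SimpleGraph W}
    (hG : G.Connected) (hH : H.Connected) {x y : V × W} (p : (G.boxProd H).Walk x y) :
    G.dist x.1 y.1 + H.dist x.2 y.2 ≤ p.length := by
  induction p with
  | nil => simp
  | @cons u v w h q ih =>
    rw [SimpleGraph.Walk.length_cons]
    rw [SimpleGraph.boxProd_adj] at h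
    rcases h with ⟨ha, he⟩ | ⟨ha, he⟩
    · have h1 : G.dist u.1 w.1 ≤ 1 + G.dist v.1 w.1 := by
        calc G.dist u.1 w.1 ≤ G.dist u.1 v.1 + G.dist v.1 w.1 := hG.dist_triangle
          _ ≤ 1 + G.dist v.1 w.1 := by
              have : G.dist u.1 v.1 ≤ 1 := by
                simpa using SimpleGraph.dist_le (SimpleGraph.Walk.cons ha SimpleGraph.Walk.nil)
              omega
      have h2 : H.dist u.2 w.2 = H.dist v.2 w.2 := by rw [he]
      omega
    · have h1 : H.dist u.2 w.2 ≤ 1 + H.dist v.2 w.2 := by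
        calc H.dist u.2 w.2 ≤ H.dist u.2 v.2 + H.dist v.2 w.2 := hH.dist_triangle
          _ ≤ 1 + H.dist v.2 w.2 := by
              have : H.dist u.2 v.2 ≤ 1 := by
                simpa using SimpleGraph.dist_le (SimpleGraph.Walk.cons ha SimpleGraph.Walk.nil)
              omega
      have h2 : G.dist u.1 w.1 = G.dist v.1 w.1 := by rw [he]
      omega

lemma boxProd_dist_eq {V W : Type*} {G : SimpleGraph V} {H : SimpleGraph W}
    (hG : G.Connected) (hH : H.Connected) (x y : V × W) :
    (G.boxProd H).dist x y = G.dist x.1 y.1 + H.dist x.2 y.2 := by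
  obtain ⟨a, b⟩ := x
  obtain ⟨c, d⟩ := y
  refine le_antisymm ?_ ?_
  · obtain ⟨p, hp⟩ := hG.exists_walk_length_eq_dist a c
    obtain ⟨q, hq⟩ := hH.exists_walk_length_eq_dist b d
    have := SimpleGraph.dist_le ((p.boxProdLeft H b).append (q.boxProdRight G c))
    have e1 : (p.boxProdLeft H b).length = p.length := SimpleGraph.Walk.length_map _ _
    have e2 : (q.boxProdRight G c).length = q.length := SimpleGraph.Walk.length_map _ _
    rw [SimpleGraph.Walk.length_append, e1, e2, hp, hq] at this
    exact this
  · obtain ⟨r, hr⟩ := (hG.boxProd hH).exists_walk_length_eq_dist (a, b) (c, d)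
    have := walk_len_ge hG hH r
    rw [hr] at this
    exact this



/-- The distance matrix of a graph `G`, as a real matrix. -/
noncomputable def distMatrix {V : Type*} [Fintype V] (G : SimpleGraph V) : Matrix V V ℝ :=
  Matrix.of fun u v => (G.dist u v : ℝ)

theorem distMatrix_isHermitian {V : Type*} [Fintype V] (G : SimpleGraph V) :
    (distMatrix G).IsHermitian := by
  unfold Matrix.IsHermitian
  ext u v
  simp [distMatrix, Matrix.conjTranspose_apply, SimpleGraph.dist_comm]

/-- `n₊(M)`: the number of positive eigenvalues, with multiplicity. -/
noncomputable def posCount {V : Type*} [Fintype V] [DecidableEq V] {M : Matrix V V ℝ}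
    (hM : M.IsHermitian) : ℕ :=
  (Finset.univ.filter fun i => 0 < hM.eigenvalues i).card

/-- `n₋(M)`: the number of negative eigenvalues, with multiplicity. -/
noncomputable def negCount {V : Type*} [Fintype V] [DecidableEq V] {M : Matrix V V ℝ}
    (hM : M.IsHermitian) : ℕ :=
  (Finset.univ.filter fun i => hM.eigenvalues i < 0).card


open InertiaAux Matrix Module in
theorem inertia_boxProd_ge' {V W : Type*} [Fintype V] [DecidableEq V]
    [Fintype W] [DecidableEq W]
    (G : SimpleGraph V) (H : SimpleGraph W) (hG : G.Connected) (hH : H.Connected)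
    (ρG ρH : ℝ)
    (hrG : ∀ u, ∑ v, distMatrix G u v = ρG)
    (hrH : ∀ u, ∑ v, distMatrix H u v = ρH) :
    negCount (distMatrix_isHermitian G) + negCount (distMatrix_isHermitian H) ≤
        negCount (distMatrix_isHermitian (G.boxProd H)) ∧
      (1 : ℤ) + ((posCount (distMatrix_isHermitian G) : ℤ) - 1) +
          ((posCount (distMatrix_isHermitian H) : ℤ) - 1) ≤
        (posCount (distMatrix_isHermitian (G.boxProd H)) : ℤ) := by
  classical
  haveI : Nonempty V := hG.nonempty
  haveI : Nonempty W := hH.nonempty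
  set DG := distMatrix G with hDGdef
  set DH := distMatrix H with hDHdef
  set DB := distMatrix (G.boxProd H) with hDBdef
  have hGm := distMatrix_isHermitian G
  have hHm := distMatrix_isHermitian H
  have hBm := distMatrix_isHermitian (G.boxProd H)
  have hD : ∀ (a c : V) (b d : W), DB (a,b) (c,d) = DG a c + DH b d := by
    intro a c b d
    show ((G.boxProd H).dist (a,b) (c,d) : ℝ) = (G.dist a c : ℝ) + (H.dist b d : ℝ)
    rw [boxProd_dist_eq hG hH (a,b) (c,d)]
    push_cast
    rfl
  have hρG0 : 0 ≤ ρG := by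
    rw [← hrG (Classical.arbitrary V)]
    exact Finset.sum_nonneg fun v _ => Nat.cast_nonneg _
  have hρH0 : 0 ≤ ρH := by
    rw [← hrH (Classical.arbitrary W)]
    exact Finset.sum_nonneg fun v _ => Nat.cast_nonneg _
  constructor
  · -- NEGATIVE PART
    set UG := spanPart hGm (fun i => hGm.eigenvalues i < 0) with hUGdef
    set UH := spanPart hHm (fun i => hHm.eigenvalues i < 0) with hUHdef
    have hUGsum : ∀ x ∈ UG, ∑ a, x a = 0 := by
      intro x hx
      exact spanPart_linfun_eq_zero hGm _ hx sumF fun i hi =>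
        sum_eigvec_eq_zero hGm hrG (mulVec_evec hGm i) (by linarith)
    have hUHsum : ∀ y ∈ UH, ∑ b, y b = 0 := by
      intro y hy
      exact spanPart_linfun_eq_zero hHm _ hy sumF fun i hi =>
        sum_eigvec_eq_zero hHm hrH (mulVec_evec hHm i) (by linarith)
    set Wn : Submodule ℝ (V × W → ℝ) := UG.map L1 ⊔ UH.map L2 with hWndef
    have hWnrank : Module.finrank ℝ ↥Wn
        = negCount (distMatrix_isHermitian G) + negCount (distMatrix_isHermitian H) := by
      rw [hWndef, finrank_sup2 UG UH hUGsum, hUGdef, hUHdef, finrank_spanPart, finrank_spanPart]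
      rfl
    have hWnquad : ∀ z ∈ Wn, z ≠ 0 → 0 < (-1 : ℝ) * (z ⬝ᵥ DB *ᵥ z) := by
      intro z hz hz0
      rw [Submodule.mem_sup] at hz
      obtain ⟨u, ⟨x, hx, rfl⟩, v, ⟨y, hy, rfl⟩, rfl⟩ := hz
      have hzq : (L1 x + L2 y) ⬝ᵥ DB *ᵥ (L1 x + L2 y)
          = (Fintype.card W : ℝ) ^ 2 * (x ⬝ᵥ DG *ᵥ x)
            + (Fintype.card V : ℝ) ^ 2 * (y ⬝ᵥ DH *ᵥ y) := by
        have h := quad_decomp hD hGm hHm hrG hrH (hUGsum x hx) (hUHsum y hy) 0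
        simpa using h
      have hGneg : x ≠ 0 → x ⬝ᵥ DG *ᵥ x < 0 := fun h0 => by
        have := spanPart_quad hGm (-1) _ (fun i hi => by simpa using hi) hx h0
        linarith
      have hHneg : y ≠ 0 → y ⬝ᵥ DH *ᵥ y < 0 := fun h0 => by
        have := spanPart_quad hHm (-1) _ (fun i hi => by simpa using hi) hy h0
        linarith
      have hm2 : (0:ℝ) < (Fintype.card W : ℝ) ^ 2 := by positivity
      have hn2 : (0:ℝ) < (Fintype.card V : ℝ) ^ 2 := by positivity
      have ha : x ⬝ᵥ DG *ᵥ x ≤ 0 := by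
        by_cases h0 : x = 0
        · rw [h0]; simp
        · exact (hGneg h0).le
      have hb : y ⬝ᵥ DH *ᵥ y ≤ 0 := by
        by_cases h0 : y = 0
        · rw [h0]; simp
        · exact (hHneg h0).le
      have hstrict : (Fintype.card W : ℝ) ^ 2 * (x ⬝ᵥ DG *ᵥ x)
          + (Fintype.card V : ℝ) ^ 2 * (y ⬝ᵥ DH *ᵥ y) < 0 := by
        by_cases hx0 : x = 0
        · have hy0 : y ≠ 0 := by
            intro h
            exact hz0 (by rw [hx0, h]; simp)
          have p1 : (Fintype.card W : ℝ) ^ 2 * (x ⬝ᵥ DG *ᵥ x) ≤ 0 :=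
            mul_nonpos_of_nonneg_of_nonpos hm2.le ha
          have p2 : (Fintype.card V : ℝ) ^ 2 * (y ⬝ᵥ DH *ᵥ y) < 0 :=
            mul_neg_of_pos_of_neg hn2 (hHneg hy0)
          linarith
        · have p1 : (Fintype.card W : ℝ) ^ 2 * (x ⬝ᵥ DG *ᵥ x) < 0 :=
            mul_neg_of_pos_of_neg hm2 (hGneg hx0)
          have p2 : (Fintype.card V : ℝ) ^ 2 * (y ⬝ᵥ DH *ᵥ y) ≤ 0 :=
            mul_nonpos_of_nonneg_of_nonpos hn2.le hb
          linarith
      rw [hzq]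
      linarith
    have := finrank_le_card_filter hBm (-1) (fun i => hBm.eigenvalues i < 0)
      (fun i hi => by simp only [not_lt] at hi; linarith) Wn hWnquad
    rw [hWnrank] at this
    exact this
  · -- POSITIVE PART
    set s : ℝ := (Fintype.card W : ℝ) * ρG + (Fintype.card V : ℝ) * ρH with hsdef
    by_cases hs : 0 < s
    · set UG := spanPart hGm (fun i => 0 < hGm.eigenvalues i) ⊓ LinearMap.ker sumF with hUGdef
      set UH := spanPart hHm (fun i => 0 < hHm.eigenvalues i) ⊓ LinearMap.ker sumF with hUHdef
      have hUGsum : ∀ x ∈ UG, ∑ a, x a = 0 := fun x hx => (Submodule.mem_inf.1 hx).2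
      have hUHsum : ∀ y ∈ UH, ∑ b, y b = 0 := fun y hy => (Submodule.mem_inf.1 hy).2
      have hUGrank : (posCount (distMatrix_isHermitian G) : ℤ) - 1 ≤ Module.finrank ℝ ↥UG := by
        have h1 := finrank_inf_ker (spanPart hGm (fun i => 0 < hGm.eigenvalues i)) sumF
        rw [finrank_spanPart] at h1
        have h2 : posCount (distMatrix_isHermitian G)
            = (Finset.univ.filter fun i => 0 < hGm.eigenvalues i).card := rfl
        rw [← hUGdef] at h1
        omega
      have hUHrank : (posCount (distMatrix_isHermitian H) : ℤ) - 1 ≤ Module.finrank ℝ ↥UH := by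
        have h1 := finrank_inf_ker (spanPart hHm (fun i => 0 < hHm.eigenvalues i)) sumF
        rw [finrank_spanPart] at h1
        have h2 : posCount (distMatrix_isHermitian H)
            = (Finset.univ.filter fun i => 0 < hHm.eigenvalues i).card := rfl
        rw [← hUHdef] at h1
        omega
      set Wp : Submodule ℝ (V × W → ℝ) := UG.map L1 ⊔ UH.map L2 ⊔ (ℝ ∙ c1) with hWpdef
      have hWprank : Module.finrank ℝ ↥Wp
          = Module.finrank ℝ ↥UG + Module.finrank ℝ ↥UH + 1 :=
        finrank_sup3 UG UH hUGsum hUHsum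
      have hWpquad : ∀ z ∈ Wp, z ≠ 0 → 0 < (1 : ℝ) * (z ⬝ᵥ DB *ᵥ z) := by
        intro z hz hz0
        rw [Submodule.mem_sup] at hz
        obtain ⟨u, hu, w, hw, rfl⟩ := hz
        rw [Submodule.mem_sup] at hu
        obtain ⟨u1, ⟨x, hx, rfl⟩, v1, ⟨y, hy, rfl⟩, rfl⟩ := hu
        rw [Submodule.mem_span_singleton] at hw
        obtain ⟨t, rfl⟩ := hw
        have hzq : (L1 x + L2 y + t • c1) ⬝ᵥ DB *ᵥ (L1 x + L2 y + t • c1)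
            = (Fintype.card W : ℝ) ^ 2 * (x ⬝ᵥ DG *ᵥ x)
              + (Fintype.card V : ℝ) ^ 2 * (y ⬝ᵥ DH *ᵥ y)
              + t ^ 2 * (s * ((Fintype.card V : ℝ) * (Fintype.card W : ℝ))) :=
          quad_decomp hD hGm hHm hrG hrH (hUGsum x hx) (hUHsum y hy) t
        have hGpos : x ≠ 0 → 0 < x ⬝ᵥ DG *ᵥ x := fun h0 => by
          have := spanPart_quad hGm 1 _ (fun i hi => by simpa using hi)
            (Submodule.mem_inf.1 hx).1 h0
          linarith
        have hHpos : y ≠ 0 → 0 < y ⬝ᵥ DH *ᵥ y := fun h0 => by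
          have := spanPart_quad hHm 1 _ (fun i hi => by simpa using hi)
            (Submodule.mem_inf.1 hy).1 h0
          linarith
        have hGnn : 0 ≤ x ⬝ᵥ DG *ᵥ x := by
          by_cases h0 : x = 0
          · rw [h0]; simp
          · exact (hGpos h0).le
        have hHnn : 0 ≤ y ⬝ᵥ DH *ᵥ y := by
          by_cases h0 : y = 0
          · rw [h0]; simp
          · exact (hHpos h0).le
        have hm2 : (0:ℝ) < (Fintype.card W : ℝ) ^ 2 := by positivity
        have hn2 : (0:ℝ) < (Fintype.card V : ℝ) ^ 2 := by positivity
        have hnm : (0:ℝ) < (Fintype.card V : ℝ) * (Fintype.card W : ℝ) := by positivity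
        have q1 : 0 ≤ (Fintype.card W : ℝ) ^ 2 * (x ⬝ᵥ DG *ᵥ x) := mul_nonneg hm2.le hGnn
        have q2 : 0 ≤ (Fintype.card V : ℝ) ^ 2 * (y ⬝ᵥ DH *ᵥ y) := mul_nonneg hn2.le hHnn
        have q3 : 0 ≤ t ^ 2 * (s * ((Fintype.card V : ℝ) * (Fintype.card W : ℝ))) :=
          mul_nonneg (sq_nonneg t) (mul_nonneg hs.le hnm.le)
        rw [one_mul, hzq]
        by_cases hx0 : x = 0
        · by_cases hy0 : y = 0
          · have ht0 : t ≠ 0 := by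
              intro h
              exact hz0 (by rw [hx0, hy0, h]; simp)
            have hp3 : 0 < t ^ 2 * (s * ((Fintype.card V : ℝ) * (Fintype.card W : ℝ))) :=
              mul_pos (by positivity) (mul_pos hs hnm)
            linarith
          · have hp2 : 0 < (Fintype.card V : ℝ) ^ 2 * (y ⬝ᵥ DH *ᵥ y) :=
              mul_pos hn2 (hHpos hy0)
            linarith
        · have hp1 : 0 < (Fintype.card W : ℝ) ^ 2 * (x ⬝ᵥ DG *ᵥ x) :=
            mul_pos hm2 (hGpos hx0)
          linarith
      have hkey := finrank_le_card_filter hBm 1 (fun i => 0 < hBm.eigenvalues i)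
        (fun i hi => by simp only [not_lt] at hi; linarith) Wp hWpquad
      have h3 : posCount (distMatrix_isHermitian (G.boxProd H))
          = (Finset.univ.filter fun i => 0 < hBm.eigenvalues i).card := rfl
      rw [hWprank] at hkey
      omega
    · -- degenerate case: both row sums are zero, so both matrices vanish
      push_neg at hs
      have hs' : (Fintype.card W : ℝ) * ρG + (Fintype.card V : ℝ) * ρH ≤ 0 := by
        rw [hsdef] at hs; exact hs
      have t1 : 0 ≤ (Fintype.card W : ℝ) * ρG := mul_nonneg (Nat.cast_nonneg _) hρG0
      have t2 : 0 ≤ (Fintype.card V : ℝ) * ρH := mul_nonneg (Nat.cast_nonneg _) hρH0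
      have e1 : (Fintype.card W : ℝ) * ρG = 0 := by linarith
      have e2 : (Fintype.card V : ℝ) * ρH = 0 := by linarith
      have hρG : ρG = 0 := by
        rcases mul_eq_zero.1 e1 with h | h
        · exact absurd h (Nat.cast_ne_zero.mpr Fintype.card_ne_zero)
        · exact h
      have hρH : ρH = 0 := by
        rcases mul_eq_zero.1 e2 with h | h
        · exact absurd h (Nat.cast_ne_zero.mpr Fintype.card_ne_zero)
        · exact h
      have hDG0 : DG = 0 := by
        ext u v
        have h1 : ∑ v, DG u v = 0 := by rw [hrG u, hρG]
        have h2 : ∀ v ∈ Finset.univ, (0:ℝ) ≤ DG u v := fun v _ => by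
          show (0:ℝ) ≤ (G.dist u v : ℝ); positivity
        have := (Finset.sum_eq_zero_iff_of_nonneg h2).1 h1 v (Finset.mem_univ v)
        simpa using this
      have hDH0 : DH = 0 := by
        ext u v
        have h1 : ∑ v, DH u v = 0 := by rw [hrH u, hρH]
        have h2 : ∀ v ∈ Finset.univ, (0:ℝ) ≤ DH u v := fun v _ => by
          show (0:ℝ) ≤ (H.dist u v : ℝ); positivity
        have := (Finset.sum_eq_zero_iff_of_nonneg h2).1 h1 v (Finset.mem_univ v)
        simpa using this
      have hpcG : posCount (distMatrix_isHermitian G) = 0 := by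
        have hev : ∀ i, hGm.eigenvalues i = 0 := by
          intro i
          rw [hGm.eigenvalues_eq]
          have hmv : ∀ f : V → ℝ, distMatrix G *ᵥ f = 0 := fun f => by
            rw [show distMatrix G = 0 from hDG0]; simp
          rw [hmv]
          simp
        rw [show posCount (distMatrix_isHermitian G)
          = (Finset.univ.filter fun i => 0 < hGm.eigenvalues i).card from rfl]
        rw [Finset.card_eq_zero, Finset.filter_eq_empty_iff]
        intro i _
        rw [hev i]
        simp
      have hpcH : posCount (distMatrix_isHermitian H) = 0 := by
        have hev : ∀ i, hHm.eigenvalues i = 0 := by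
          intro i
          rw [hHm.eigenvalues_eq]
          have hmv : ∀ f : W → ℝ, distMatrix H *ᵥ f = 0 := fun f => by
            rw [show distMatrix H = 0 from hDH0]; simp
          rw [hmv]
          simp
        rw [show posCount (distMatrix_isHermitian H)
          = (Finset.univ.filter fun i => 0 < hHm.eigenvalues i).card from rfl]
        rw [Finset.card_eq_zero, Finset.filter_eq_empty_iff]
        intro i _
        rw [hev i]
        simp
      rw [hpcG, hpcH]
      have : (0:ℤ) ≤ (posCount (distMatrix_isHermitian (G.boxProd H)) : ℤ) := Int.ofNat_nonneg _
      omega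

/-- If `G` and `H` are connected graphs whose distance matrices have constant
row sums, then `n₋(D(G □ H)) ≥ n₋(D(G)) + n₋(D(H))` and
`n₊(D(G □ H)) ≥ 1 + (n₊(D(G)) − 1) + (n₊(D(H)) − 1)`. -/
theorem inertia_boxProd_ge {V W : Type*} [Fintype V] [DecidableEq V]
    [Fintype W] [DecidableEq W]
    (G : SimpleGraph V) (H : SimpleGraph W) (hG : G.Connected) (hH : H.Connected)
    (ρG ρH : ℝ)
    (hrG : ∀ u, ∑ v, distMatrix G u v = ρG)
    (hrH : ∀ u, ∑ v, distMatrix H u v = ρH) :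
    negCount (distMatrix_isHermitian G) + negCount (distMatrix_isHermitian H) ≤
        negCount (distMatrix_isHermitian (G.boxProd H)) ∧
      (1 : ℤ) + ((posCount (distMatrix_isHermitian G) : ℤ) - 1) +
          ((posCount (distMatrix_isHermitian H) : ℤ) - 1) ≤
        (posCount (distMatrix_isHermitian (G.boxProd H)) : ℤ) := by
  exact inertia_boxProd_ge' G H hG hH ρG ρH hrG hrH
end

section
/- (Witsenhausen's inequality) Let G be a connected simple graph with distance matrix D(G). Then N(G) ≥ max(n₊(D(G)), n₋(D(G))); that is, any addressing of G has length at least max(n₊(D(G)), n₋(D(G))). -/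
/-- An addressing of length `t` of a graph `G`: each vertex gets a `t`-tuple over a
three-symbol alphabet (`0` = symbol "0", `1` = symbol "a", `2` = symbol "b") such that the
graph distance between any two vertices equals the number of coordinates where one address
has `a` and the other has `b`. -/
def IsAddressing {V : Type*} (G : SimpleGraph V) {t : ℕ} (f : V → Fin t → Fin 3) : Prop :=
  ∀ u v : V, G.dist u v =
    (Finset.univ.filter fun i =>
      (f u i = 1 ∧ f v i = 2) ∨ (f u i = 2 ∧ f v i = 1)).card

/-- `N(G)`: the minimum length of an addressing of `G`. -/
noncomputable def graphN {V : Type*} (G : SimpleGraph V) : ℕ :=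
  sInf {t | ∃ f : V → Fin t → Fin 3, IsAddressing G f}

open Matrix Finset

section WitsenhausenAux

set_option linter.unusedSectionVars false

variable {V : Type*} [Fintype V] [DecidableEq V]

lemma my_dotProduct_sum_left {ι : Type*} [Fintype ι] (f : ι → V → ℝ) (y : V → ℝ) :
    (∑ i, f i) ⬝ᵥ y = ∑ i, f i ⬝ᵥ y := by
  simp only [dotProduct, Finset.sum_apply, Finset.sum_mul]
  exact Finset.sum_comm

lemma my_dotProduct_sum_right {ι : Type*} [Fintype ι] (x : V → ℝ) (f : ι → V → ℝ) :
    x ⬝ᵥ (∑ i, f i) = ∑ i, x ⬝ᵥ f i := by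
  simp only [dotProduct, Finset.sum_apply, Finset.mul_sum]
  exact Finset.sum_comm

lemma my_mulVec_sum {ι : Type*} [Fintype ι] (M : Matrix V V ℝ) (f : ι → V → ℝ) :
    M *ᵥ (∑ i, f i) = ∑ i, M *ᵥ f i := by
  ext v
  simp only [mulVec, dotProduct, Finset.sum_apply, Finset.mul_sum]
  exact Finset.sum_comm

lemma my_sum_mulVec {ι : Type*} [Fintype ι] (A : ι → Matrix V V ℝ) (x : V → ℝ) :
    (∑ i, A i) *ᵥ x = ∑ i, A i *ᵥ x := by
  ext v
  simp only [mulVec, dotProduct, Finset.sum_apply, Finset.sum_mul, Matrix.sum_apply]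
  exact Finset.sum_comm

lemma my_vecMulVec_mulVec (w : V → ℝ) (x : V → ℝ) :
    vecMulVec w w *ᵥ x = (w ⬝ᵥ x) • w := by
  ext v
  simp [vecMulVec, mulVec, dotProduct, Finset.mul_sum, mul_comm, mul_left_comm]

lemma dot_orth {M : Matrix V V ℝ} (hM : M.IsHermitian) (i j : V) :
    (⇑(hM.eigenvectorBasis i) ⬝ᵥ ⇑(hM.eigenvectorBasis j) : ℝ) = if i = j then 1 else 0 := by
  have h := hM.eigenvectorBasis.orthonormal
  rw [orthonormal_iff_ite] at h
  have h2 := h i j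
  simpa [PiLp.inner_apply, RCLike.inner_apply, dotProduct, mul_comm] using h2

lemma quadform_eq {M : Matrix V V ℝ} (hM : M.IsHermitian) {ι : Type*} [Fintype ι] [DecidableEq ι]
    (g : ι → V) (hg : Function.Injective g) (c : ι → ℝ) :
    (∑ i, c i • ⇑(hM.eigenvectorBasis (g i))) ⬝ᵥ (M *ᵥ (∑ i, c i • ⇑(hM.eigenvectorBasis (g i))))
      = ∑ i, hM.eigenvalues (g i) * (c i)^2 := by
  have hmv : M *ᵥ (∑ i, c i • ⇑(hM.eigenvectorBasis (g i)))
      = ∑ i, (c i * hM.eigenvalues (g i)) • ⇑(hM.eigenvectorBasis (g i)) := by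
    rw [show (∑ i, c i • ⇑(hM.eigenvectorBasis (g i)))
        = ∑ i, (fun i => c i • ⇑(hM.eigenvectorBasis (g i))) i from rfl,
      my_mulVec_sum]
    refine Finset.sum_congr rfl fun i _ => ?_
    rw [mulVec_smul, hM.mulVec_eigenvectorBasis, smul_smul, mul_comm]
  rw [hmv, my_dotProduct_sum_right]
  refine Finset.sum_congr rfl fun j _ => ?_
  rw [dotProduct_smul, my_dotProduct_sum_left]
  simp only [smul_dotProduct, dot_orth hM, smul_eq_mul, hg.eq_iff, mul_ite, mul_one, mul_zero,
    Finset.sum_ite_eq' Finset.univ j c, Finset.mem_univ, if_true]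
  ring

lemma rank_sum_vecMulVec_le {ι : Type*} [Fintype ι] (w : ι → V → ℝ) :
    (∑ i, vecMulVec (w i) (w i)).rank ≤ Fintype.card ι := by
  rw [Matrix.rank]
  have hsub : LinearMap.range (∑ i, vecMulVec (w i) (w i)).mulVecLin
      ≤ Submodule.span ℝ (Set.range w) := by
    rintro y ⟨x, rfl⟩
    rw [Matrix.mulVecLin_apply, my_sum_mulVec]
    refine Submodule.sum_mem _ fun i _ => ?_
    rw [my_vecMulVec_mulVec]
    exact Submodule.smul_mem _ _ (Submodule.subset_span ⟨i, rfl⟩)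
  exact (Submodule.finrank_mono hsub).trans (finrank_range_le_card w)

lemma exists_null_comb {ι : Type*} [Fintype ι] (P : Matrix V V ℝ) (w : ι → V → ℝ)
    (hcard : P.rank < Fintype.card ι) :
    ∃ c : ι → ℝ, c ≠ 0 ∧ P *ᵥ (∑ i, c i • w i) = 0 := by
  set T : (ι → ℝ) →ₗ[ℝ] (V → ℝ) :=
    P.mulVecLin ∘ₗ (Fintype.linearCombination ℝ w) with hT
  have hrange : Module.finrank ℝ (LinearMap.range T) ≤ P.rank := by
    refine Submodule.finrank_mono ?_
    rw [hT]
    exact LinearMap.range_comp_le_range _ _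
  have hker : 0 < Module.finrank ℝ (LinearMap.ker T) := by
    have h1 := LinearMap.finrank_range_add_finrank_ker T
    have h2 : Module.finrank ℝ (ι → ℝ) = Fintype.card ι := by
      simp [Module.finrank_pi]
    omega
  have : Nontrivial (LinearMap.ker T) := Module.finrank_pos_iff.mp hker
  obtain ⟨c, hc⟩ := exists_ne (0 : LinearMap.ker T)
  refine ⟨c.1, fun h0 => hc (Subtype.ext h0), ?_⟩
  have := c.2
  rw [LinearMap.mem_ker] at this
  simp only [hT, LinearMap.comp_apply, Fintype.linearCombination_apply,
    Matrix.mulVecLin_apply] at this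
  exact this

lemma count_pos_le_rank {M : Matrix V V ℝ} (hM : M.IsHermitian) (P : Matrix V V ℝ)
    (h : ∀ x : V → ℝ, P *ᵥ x = 0 → x ⬝ᵥ (M *ᵥ x) ≤ 0) :
    (Finset.univ.filter fun i => 0 < hM.eigenvalues i).card ≤ P.rank := by
  by_contra hlt
  push_neg at hlt
  set S := Finset.univ.filter fun i => 0 < hM.eigenvalues i with hS
  have hcard : P.rank < Fintype.card ↥S := by rwa [Fintype.card_coe]
  obtain ⟨c, hc0, hker⟩ :=
    exists_null_comb P (fun i : ↥S => ⇑(hM.eigenvectorBasis i.1)) hcard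
  have hq := quadform_eq hM (Subtype.val : ↥S → V) Subtype.val_injective c
  have hle := h _ hker
  rw [hq] at hle
  have hpos : 0 < ∑ i : ↥S, hM.eigenvalues i.1 * (c i)^2 := by
    obtain ⟨i, hi⟩ := Function.ne_iff.mp hc0
    simp only [Pi.zero_apply] at hi
    refine Finset.sum_pos' (fun j _ => ?_) ⟨i, Finset.mem_univ i, ?_⟩
    · have h1 : 0 < hM.eigenvalues j.1 := (Finset.mem_filter.mp j.2).2
      exact mul_nonneg h1.le (sq_nonneg _)
    · have h1 : 0 < hM.eigenvalues i.1 := (Finset.mem_filter.mp i.2).2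
      have h2 : 0 < (c i)^2 := (sq_nonneg (c i)).lt_of_ne (Ne.symm (pow_ne_zero 2 hi))
      exact mul_pos h1 h2
  linarith

lemma count_neg_le_rank {M : Matrix V V ℝ} (hM : M.IsHermitian) (P : Matrix V V ℝ)
    (h : ∀ x : V → ℝ, P *ᵥ x = 0 → 0 ≤ x ⬝ᵥ (M *ᵥ x)) :
    (Finset.univ.filter fun i => hM.eigenvalues i < 0).card ≤ P.rank := by
  by_contra hlt
  push_neg at hlt
  set S := Finset.univ.filter fun i => hM.eigenvalues i < 0 with hS
  have hcard : P.rank < Fintype.card ↥S := by rwa [Fintype.card_coe]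
  obtain ⟨c, hc0, hker⟩ :=
    exists_null_comb P (fun i : ↥S => ⇑(hM.eigenvectorBasis i.1)) hcard
  have hq := quadform_eq hM (Subtype.val : ↥S → V) Subtype.val_injective c
  have hle := h _ hker
  rw [hq] at hle
  have hpos : 0 < ∑ i : ↥S, -(hM.eigenvalues i.1 * (c i)^2) := by
    obtain ⟨i, hi⟩ := Function.ne_iff.mp hc0
    simp only [Pi.zero_apply] at hi
    refine Finset.sum_pos' (fun j _ => ?_) ⟨i, Finset.mem_univ i, ?_⟩
    · have h1 : hM.eigenvalues j.1 < 0 := (Finset.mem_filter.mp j.2).2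
      nlinarith [sq_nonneg (c j)]
    · have h1 : hM.eigenvalues i.1 < 0 := (Finset.mem_filter.mp i.2).2
      have h2 : 0 < (c i)^2 := (sq_nonneg (c i)).lt_of_ne (Ne.symm (pow_ne_zero 2 hi))
      nlinarith
  rw [Finset.sum_neg_distrib] at hpos
  linarith

lemma exists_addressing (G : SimpleGraph V) :
    ∃ (t : ℕ) (f : V → Fin t → Fin 3), IsAddressing G f := by
  classical
  let e : V ≃ Fin (Fintype.card V) := Fintype.equivFin V
  let I := Σ u : V, Σ v : V, Fin (G.dist u v)
  let eqI : I ≃ Fin (Fintype.card I) := Fintype.equivFin I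
  let g : V → I → Fin 3 := fun w x =>
    if ((e x.1 : ℕ) < (e x.2.1 : ℕ)) then
      (if w = x.1 then 1 else if w = x.2.1 then 2 else 0) else 0
  refine ⟨Fintype.card I, fun w j => g w (eqI.symm j), fun u v => ?_⟩
  have hne : ∀ {a b : V}, (e a : ℕ) < (e b : ℕ) → a ≠ b := by
    intro a b h hab; subst hab; exact lt_irrefl _ h
  have hcond : ∀ x : I,
      ((g u x = 1 ∧ g v x = 2) ∨ (g u x = 2 ∧ g v x = 1)) ↔
      ((x.1 = u ∧ x.2.1 = v ∧ (e u : ℕ) < (e v : ℕ)) ∨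
       (x.1 = v ∧ x.2.1 = u ∧ (e v : ℕ) < (e u : ℕ))) := by
    intro x
    have h1 : ∀ w, g w x = 1 ↔ ((e x.1 : ℕ) < (e x.2.1 : ℕ) ∧ w = x.1) := by
      intro w
      simp only [g]
      split_ifs with ha hb hc <;> simp_all
    have h2 : ∀ w, g w x = 2 ↔ ((e x.1 : ℕ) < (e x.2.1 : ℕ) ∧ w ≠ x.1 ∧ w = x.2.1) := by
      intro w
      simp only [g]
      split_ifs with ha hb hc <;> simp_all
    rw [h1, h2, h2, h1]
    constructor
    · rintro (⟨⟨hlt, hu⟩, _, _, hv⟩ | ⟨⟨hlt, _, hu⟩, _, hv⟩)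
      · exact Or.inl ⟨hu.symm, hv.symm, by subst hu; subst hv; exact hlt⟩
      · exact Or.inr ⟨hv.symm, hu.symm, by subst hu; subst hv; exact hlt⟩
    · rintro (⟨hu, hv, hlt⟩ | ⟨hv, hu, hlt⟩)
      · subst hu; subst hv
        exact Or.inl ⟨⟨hlt, rfl⟩, hlt, fun h => (hne hlt) h.symm, rfl⟩
      · subst hu; subst hv
        exact Or.inr ⟨⟨hlt, fun h => (hne hlt) h.symm, rfl⟩, hlt, rfl⟩
  rw [show G.dist u v = (Finset.range (G.dist u v)).card from (Finset.card_range _).symm]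
  refine Finset.card_bij'
    (i := fun a ha =>
      if h : (e u : ℕ) < (e v : ℕ) then
        eqI ⟨u, v, ⟨a, Finset.mem_range.mp ha⟩⟩
      else
        eqI ⟨v, u, ⟨a, by rw [SimpleGraph.dist_comm]; exact Finset.mem_range.mp ha⟩⟩)
    (j := fun b hb => ((eqI.symm b).2.2 : ℕ)) ?_ ?_ ?_ ?_
  · -- maps into filter
    intro a ha
    have hauv : u ≠ v := by
      intro h; subst h
      simp [SimpleGraph.dist_self] at ha
    rw [Finset.mem_filter]
    refine ⟨Finset.mem_univ _, ?_⟩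
    split_ifs with h
    · simp only [Equiv.symm_apply_apply]
      exact (hcond _).mpr (Or.inl ⟨rfl, rfl, h⟩)
    · simp only [Equiv.symm_apply_apply]
      have hlt : (e v : ℕ) < (e u : ℕ) := by
        have : (e u : ℕ) ≠ (e v : ℕ) := fun hh => hauv (e.injective (Fin.ext hh))
        omega
      exact (hcond _).mpr (Or.inr ⟨rfl, rfl, hlt⟩)
  · -- inverse maps into range
    intro b hb
    rw [Finset.mem_filter, hcond] at hb
    rw [Finset.mem_range]
    rcases hx : eqI.symm b with ⟨p, q, m⟩
    rw [hx] at hb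
    simp only at hb
    show (m : ℕ) < G.dist u v
    rcases hb.2 with ⟨hu, hv, _⟩ | ⟨hu, hv, _⟩
    · subst hu; subst hv; exact m.isLt
    · subst hu; subst hv
      exact lt_of_lt_of_le m.isLt (le_of_eq (SimpleGraph.dist_comm ..))
  · -- left inverse
    intro a ha
    beta_reduce
    by_cases h : (e u : ℕ) < (e v : ℕ)
    · rw [dif_pos h, Equiv.symm_apply_apply]
    · rw [dif_neg h, Equiv.symm_apply_apply]
  · -- right inverse
    intro b hb
    rw [Finset.mem_filter, hcond] at hb
    have sig_eq : ∀ (x : (u' : V) × (v' : V) × Fin (G.dist u' v')) (u' v' : V),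
        x.1 = u' → x.2.1 = v' → ∀ (k : ℕ) (hk : k < G.dist u' v'), k = (x.2.2 : ℕ) →
        (⟨u', v', ⟨k, hk⟩⟩ : (u' : V) × (v' : V) × Fin (G.dist u' v')) = x := by
      rintro ⟨p, q, m⟩ u' v' hu hv k hk hkk
      subst hu; subst hv; subst hkk
      rfl
    beta_reduce
    rcases hb.2 with ⟨hu, hv, hlt⟩ | ⟨hu, hv, hlt⟩
    · rw [dif_pos hlt]
      exact (eqI.apply_eq_iff_eq_symm_apply).mpr
        (sig_eq (eqI.symm b) u v hu hv _ _ rfl)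
    · rw [dif_neg (by omega : ¬ (e u : ℕ) < (e v : ℕ))]
      exact (eqI.apply_eq_iff_eq_symm_apply).mpr
        (sig_eq (eqI.symm b) v u hu hv _ _ rfl)

def wpF {t : ℕ} (f : V → Fin t → Fin 3) : Fin t → V → ℝ :=
  fun i v => (if f v i = 1 then 1 else 0) + (if f v i = 2 then 1 else 0)

def wmF {t : ℕ} (f : V → Fin t → Fin 3) : Fin t → V → ℝ :=
  fun i v => (if f v i = 1 then 1 else 0) - (if f v i = 2 then 1 else 0)

lemma decomp_entry {G : SimpleGraph V} {t : ℕ}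
    {f : V → Fin t → Fin 3} (hf : IsAddressing G f) (u v : V) :
    (∑ i, vecMulVec (wpF f i) (wpF f i)) u v - (∑ i, vecMulVec (wmF f i) (wmF f i)) u v
      = 2 * distMatrix G u v := by
  have hcast : (distMatrix G u v : ℝ)
      = ∑ i, (if ((f u i = 1 ∧ f v i = 2) ∨ (f u i = 2 ∧ f v i = 1)) then (1:ℝ) else 0) := by
    show ((G.dist u v : ℕ) : ℝ) = _
    rw [hf u v, Finset.card_filter]
    push_cast
    rfl
  rw [hcast, Matrix.sum_apply, Matrix.sum_apply, ← Finset.sum_sub_distrib, Finset.mul_sum]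
  refine Finset.sum_congr rfl fun i _ => ?_
  have h3 : ∀ y : Fin 3, y = 0 ∨ y = 1 ∨ y = 2 := by decide
  rcases h3 (f u i) with h1 | h1 | h1 <;> rcases h3 (f v i) with h2 | h2 | h2 <;>
    simp [vecMulVec_apply, wpF, wmF, h1, h2] <;> norm_num

lemma quad_nonneg {ι : Type*} [Fintype ι] (w : ι → V → ℝ) (x : V → ℝ) :
    0 ≤ x ⬝ᵥ ((∑ i, vecMulVec (w i) (w i)) *ᵥ x) := by
  rw [my_sum_mulVec, my_dotProduct_sum_right]
  refine Finset.sum_nonneg fun i _ => ?_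
  rw [my_vecMulVec_mulVec, dotProduct_smul, smul_eq_mul, dotProduct_comm]
  exact mul_self_nonneg _

lemma addressing_le {G : SimpleGraph V} {t : ℕ}
    {f : V → Fin t → Fin 3} (hf : IsAddressing G f) :
    max (posCount (distMatrix_isHermitian G)) (negCount (distMatrix_isHermitian G)) ≤ t := by
  set P := ∑ i, vecMulVec (wpF f i) (wpF f i) with hP
  set N := ∑ i, vecMulVec (wmF f i) (wmF f i) with hN
  have hPN : P - N = (2:ℝ) • distMatrix G := by
    ext u v
    rw [Matrix.sub_apply, Matrix.smul_apply, smul_eq_mul]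
    exact decomp_entry hf u v
  have hquad : ∀ x : V → ℝ,
      2 * (x ⬝ᵥ (distMatrix G *ᵥ x)) = x ⬝ᵥ (P *ᵥ x) - x ⬝ᵥ (N *ᵥ x) := by
    intro x
    have h1 : x ⬝ᵥ ((P - N) *ᵥ x) = x ⬝ᵥ (P *ᵥ x) - x ⬝ᵥ (N *ᵥ x) := by
      rw [Matrix.sub_mulVec, dotProduct_sub]
    rw [← h1, hPN, Matrix.smul_mulVec, dotProduct_smul, smul_eq_mul]
  have hp : posCount (distMatrix_isHermitian G) ≤ t := by
    refine le_trans (le_trans ?_ (rank_sum_vecMulVec_le (wpF f))) (by simp)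
    refine count_pos_le_rank (distMatrix_isHermitian G) P fun x hx => ?_
    have h0 : x ⬝ᵥ (P *ᵥ x) = 0 := by rw [hx, dotProduct_zero]
    have h2 := hquad x
    have h3 := quad_nonneg (wmF f) x
    rw [← hN] at h3
    linarith
  have hn : negCount (distMatrix_isHermitian G) ≤ t := by
    refine le_trans (le_trans ?_ (rank_sum_vecMulVec_le (wmF f))) (by simp)
    refine count_neg_le_rank (distMatrix_isHermitian G) N fun x hx => ?_
    have h0 : x ⬝ᵥ (N *ᵥ x) = 0 := by rw [hx, dotProduct_zero]
    have h2 := hquad x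
    have h3 := quad_nonneg (wpF f) x
    rw [← hP] at h3
    linarith
  exact max_le hp hn

end WitsenhausenAux

/-- Witsenhausen's inequality: for a connected graph `G`, every addressing
of `G` has length at least `max(n₊(D(G)), n₋(D(G)))`; hence
`N(G) ≥ max(n₊(D(G)), n₋(D(G)))`. -/
theorem witsenhausen {V : Type*} [Fintype V] [DecidableEq V]
    (G : SimpleGraph V) (hG : G.Connected) :
    (∀ (t : ℕ) (f : V → Fin t → Fin 3), IsAddressing G f →
        max (posCount (distMatrix_isHermitian G)) (negCount (distMatrix_isHermitian G)) ≤ t) ∧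
      max (posCount (distMatrix_isHermitian G)) (negCount (distMatrix_isHermitian G)) ≤
        graphN G := by
  refine ⟨fun t f hf => addressing_le hf, ?_⟩
  obtain ⟨t₀, f₀, hf₀⟩ := exists_addressing G
  refine le_csInf ⟨t₀, f₀, hf₀⟩ ?_
  rintro b ⟨f, hf⟩
  exact addressing_le hf
end

section
/- (Graham–Pollak) For every n ≥ 2, N(Kₙ) = n − 1: the complete graph on n vertices admits an addressing of length n − 1, and admits no addressing of length less than n − 1. -/
open Finset Matrix

def abDist {t : ℕ} (x y : Fin t → Fin 3) : ℕ :=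
  #{i | (x i = 1 ∧ y i = 2) ∨ (x i = 2 ∧ y i = 1)}

section

variable {t : ℕ}

@[simp]
lemma abDist_self (x : Fin t → Fin 3) : abDist x x = 0 := by
  simp only [abDist, card_eq_zero, filter_eq_empty_iff]
  rintro i - (⟨h₁, h₂⟩ | ⟨h₁, h₂⟩) <;> simp [h₁] at h₂

lemma abDist_comm (x y : Fin t → Fin 3) : abDist x y = abDist y x := by
  simp only [abDist, or_comm, and_comm]

lemma cast_abDist (x y : Fin t → Fin 3) :
    (abDist x y : ℝ) = ∑ i, if (x i = 1 ∧ y i = 2) ∨ (x i = 2 ∧ y i = 1) then 1 else 0 := by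
  rw [abDist, natCast_card_filter]

lemma isAddressing_top_iff {V : Type*} [DecidableEq V] {f : V → Fin t → Fin 3} :
    IsAddressing ⊤ f ↔ ∀ u v, abDist (f u) (f v) = if u = v then 0 else 1 := by
  simp only [IsAddressing, SimpleGraph.dist_top, abDist, eq_comm]

end

def stairAddress (n : ℕ) (v : Fin n) (j : Fin (n - 1)) : Fin 3 :=
  if (j : ℕ) < v then 1 else if (j : ℕ) = v then 2 else 0

lemma abDist_stairAddress_of_lt {n : ℕ} {u v : Fin n} (h : u < v) :
    abDist (stairAddress n u) (stairAddress n v) = 1 := by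
  have hu : (u : ℕ) < n - 1 := by omega
  rw [abDist, card_eq_one]
  refine ⟨⟨u, hu⟩, ?_⟩
  ext i
  simp only [mem_filter, mem_univ, true_and, mem_singleton, stairAddress, Fin.ext_iff,
    Fin.lt_def] at h ⊢
  split_ifs <;> simp <;> omega

lemma isAddressing_stairAddress (n : ℕ) : IsAddressing ⊤ (stairAddress n) := by
  rw [isAddressing_top_iff]
  intro u v
  rcases lt_trichotomy u v with h | rfl | h
  · simp [abDist_stairAddress_of_lt h, h.ne]
  · simp
  · rw [abDist_comm, abDist_stairAddress_of_lt h, if_neg h.ne']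

theorem Matrix.exists_mulVec_eq_zero_of_card_lt {K m n : Type*} [Field K] [Fintype m]
    [Fintype n] (M : Matrix m n K) (h : Fintype.card m < Fintype.card n) :
    ∃ x ≠ 0, M *ᵥ x = 0 := by
  have : LinearMap.ker M.mulVecLin ≠ ⊥ :=
    LinearMap.ker_ne_bot_of_finrank_lt (by simpa using h)
  obtain ⟨x, hx, hx0⟩ := (Submodule.ne_bot_iff _).mp this
  exact ⟨x, hx0, hx⟩

section

variable {V : Type*} [Fintype V]

lemma sum_sum_mul_mul_abPair_eq_zero (y : V → Fin 3) (x : V → ℝ)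
    (hy : ∑ v, (if y v = 1 then x v else 0) = 0) :
    ∑ u, ∑ v, x u * x v *
      (if (y u = 1 ∧ y v = 2) ∨ (y u = 2 ∧ y v = 1) then 1 else 0) = 0 := by
  have expand : ∀ u v, x u * x v *
      (if (y u = 1 ∧ y v = 2) ∨ (y u = 2 ∧ y v = 1) then (1 : ℝ) else 0) =
      (if y u = 1 then x u else 0) * (if y v = 2 then x v else 0) +
      (if y u = 2 then x u else 0) * (if y v = 1 then x v else 0) := by
    intro u v
    generalize y u = p, y v = q
    fin_cases p <;> fin_cases q <;> simp
  simp only [expand, sum_add_distrib, ← sum_mul_sum, hy, zero_mul, mul_zero, add_zero]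

lemma sum_sum_mul_mul_abDist_eq_zero {t : ℕ} (f : V → Fin t → Fin 3) (x : V → ℝ)
    (hx : ∀ i, ∑ v, (if f v i = 1 then x v else 0) = 0) :
    ∑ u, ∑ v, x u * x v * (abDist (f u) (f v) : ℝ) = 0 := by
  simp only [cast_abDist, mul_sum]
  rw [sum_congr rfl fun u _ => sum_comm, sum_comm]
  exact sum_eq_zero fun i _ => sum_sum_mul_mul_abPair_eq_zero (f · i) x (hx i)

lemma sum_sum_mul_mul_ite_ne [DecidableEq V] (x : V → ℝ) :
    ∑ u, ∑ v, x u * x v * (if u = v then 0 else 1) = (∑ v, x v) ^ 2 - ∑ v, x v * x v := by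
  have expand : ∀ u v,
      x u * x v * (if u = v then 0 else 1) = x u * x v - if u = v then x u * x v else 0 := by
    intro u v
    split_ifs <;> simp
  simp only [expand, sum_sub_distrib, sum_ite_eq, mem_univ, if_true, sq, sum_mul_sum]

end

theorem card_le_of_isAddressing_top {V : Type*} [Fintype V] {t : ℕ} {f : V → Fin t → Fin 3}
    (hf : IsAddressing ⊤ f) : Fintype.card V ≤ t + 1 := by
  classical
  by_contra! h
  let M : Matrix (Option (Fin t)) V ℝ := fun j v => j.elim 1 fun i => if f v i = 1 then 1 else 0
  obtain ⟨x, hx0, hMx⟩ := M.exists_mulVec_eq_zero_of_card_lt (by simpa using h)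
  have hsum : ∑ v, x v = 0 := by simpa [M, mulVec, dotProduct] using congrFun hMx none
  have ha (i : Fin t) : ∑ v, (if f v i = 1 then x v else 0) = 0 := by
    simpa [M, mulVec, dotProduct] using congrFun hMx (some i)
  have hquad := sum_sum_mul_mul_abDist_eq_zero f x ha
  simp only [isAddressing_top_iff.mp hf, Nat.cast_ite, Nat.cast_zero, Nat.cast_one,
    sum_sum_mul_mul_ite_ne, hsum] at hquad
  refine hx0 (funext fun v => (sum_mul_self_eq_zero_iff univ x).mp ?_ v (mem_univ v))
  linarith

theorem grahamPollak_general (n : ℕ) :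
    (∃ f : Fin n → Fin (n - 1) → Fin 3, IsAddressing (⊤ : SimpleGraph (Fin n)) f) ∧
      ∀ (t : ℕ) (f : Fin n → Fin t → Fin 3),
        IsAddressing (⊤ : SimpleGraph (Fin n)) f → n - 1 ≤ t := by
  refine ⟨⟨stairAddress n, isAddressing_stairAddress n⟩, fun t f hf => ?_⟩
  have := card_le_of_isAddressing_top hf
  rw [Fintype.card_fin] at this
  omega

/-- Graham–Pollak: for `n ≥ 2`, the complete graph `Kₙ` admits an addressing
of length `n − 1` and no shorter one; that is, `N(Kₙ) = n − 1`. -/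
theorem grahamPollak (n : ℕ) (hn : 2 ≤ n) :
    (∃ f : Fin n → Fin (n - 1) → Fin 3, IsAddressing (⊤ : SimpleGraph (Fin n)) f) ∧
      ∀ (t : ℕ) (f : Fin n → Fin t → Fin 3),
        IsAddressing (⊤ : SimpleGraph (Fin n)) f → n - 1 ≤ t :=
  grahamPollak_general n
end

section
/- Let n ≥ 1 and q ≥ 2 be integers, and let D be the distance matrix of the Hamming graph H(n,q). Then the eigenvalues of D are: n q^{n−1}(q−1) with multiplicity 1, −q^{n−1} with multiplicity n(q−1), and 0 with multiplicity qⁿ − 1 − n(q−1). In particular n₊(D) = 1 and n₋(D) = n(q−1). -/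
/-- The Hamming graph `H(n,q)`: vertices are `n`-tuples over a `q`-letter alphabet, two
tuples being adjacent iff their Hamming distance is `1`. -/
def hammingGraph (n q : ℕ) : SimpleGraph (Fin n → Fin q) where
  Adj x y := hammingDist x y = 1
  symm := ⟨fun x y (h : hammingDist x y = 1) => (by rwa [hammingDist_comm] : hammingDist y x = 1)⟩
  loopless := ⟨fun x (h : hammingDist x x = 1) => by simp [hammingDist_self] at h⟩

open Finset

lemma hamming_exists_walk {n q : ℕ} (x y : Fin n → Fin q) :
    ∃ w : (hammingGraph n q).Walk x y, w.length = hammingDist x y := by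
  generalize hd : hammingDist x y = d
  induction d generalizing x with
  | zero =>
    have : x = y := eq_of_hammingDist_eq_zero hd
    subst this; exact ⟨SimpleGraph.Walk.nil, rfl⟩
  | succ d ih =>
    have hxy : x ≠ y := by intro h; subst h; simp [hammingDist_self] at hd
    obtain ⟨i, hi⟩ : ∃ i, x i ≠ y i := Function.ne_iff.mp hxy
    set x' := Function.update x i (y i) with hx'
    have h1 : hammingDist x x' = 1 := by
      have : ({j | x j ≠ x' j} : Finset (Fin n)) = {i} := by
        ext j
        simp only [mem_filter, mem_univ, true_and, mem_singleton, hx', Function.update]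
        by_cases h : j = i
        · subst h; simp [hi]
        · simp [h]
      simp [hammingDist, this]
    have h2 : hammingDist x' y = d := by
      have : ({j | x' j ≠ y j} : Finset (Fin n)) = ({j | x j ≠ y j} : Finset (Fin n)).erase i := by
        ext j
        simp only [mem_filter, mem_univ, true_and, mem_erase, hx', Function.update]
        by_cases h : j = i
        · subst h; simp
        · simp [h]
      have hmem : i ∈ ({j | x j ≠ y j} : Finset (Fin n)) := by simp [hi]
      simp only [hammingDist] at hd ⊢
      rw [this, card_erase_of_mem hmem, hd]
      omega
    obtain ⟨w, hw⟩ := ih x' h2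
    exact ⟨SimpleGraph.Walk.cons (show (hammingGraph n q).Adj x x' from h1) w, by simp [hw]⟩

lemma hamming_le_walk_length {n q : ℕ} {x y : Fin n → Fin q}
    (w : (hammingGraph n q).Walk x y) : hammingDist x y ≤ w.length := by
  induction w with
  | nil => simp [hammingDist_self]
  | @cons a b c hadj p ih =>
    have ht := hammingDist_triangle a b c
    have h1 : hammingDist a b = 1 := hadj
    simp only [SimpleGraph.Walk.length_cons]
    omega

lemma hammingGraph_dist {n q : ℕ} (x y : Fin n → Fin q) :
    (hammingGraph n q).dist x y = hammingDist x y := by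
  obtain ⟨w, hw⟩ := hamming_exists_walk x y
  have h1 : (hammingGraph n q).dist x y ≤ hammingDist x y := hw ▸ SimpleGraph.dist_le w
  have h2 : hammingDist x y ≤ (hammingGraph n q).dist x y := by
    obtain ⟨p, hp⟩ := (w.reachable).exists_walk_length_eq_dist
    exact hp ▸ hamming_le_walk_length p
  omega



lemma trace_eq_sum_eigen {V : Type*} [Fintype V] [DecidableEq V] {M : Matrix V V ℝ}
    (hM : M.IsHermitian) : M.trace = ∑ i, hM.eigenvalues i := by
  have h1 : star (hM.eigenvectorUnitary : Matrix V V ℝ) * (hM.eigenvectorUnitary : Matrix V V ℝ)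
      = 1 := Matrix.mem_unitaryGroup_iff'.mp hM.eigenvectorUnitary.2
  conv_lhs => rw [hM.spectral_theorem]
  simp only [Unitary.conjStarAlgAut_apply, Unitary.coe_star]
  rw [Matrix.trace_mul_cycle, h1, one_mul, Matrix.trace_diagonal]
  simp

lemma trace_sq_eq_sum_eigen_sq {V : Type*} [Fintype V] [DecidableEq V] {M : Matrix V V ℝ}
    (hM : M.IsHermitian) : (M * M).trace = ∑ i, hM.eigenvalues i ^ 2 := by
  have h1 : star (hM.eigenvectorUnitary : Matrix V V ℝ) * (hM.eigenvectorUnitary : Matrix V V ℝ)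
      = 1 := Matrix.mem_unitaryGroup_iff'.mp hM.eigenvectorUnitary.2
  have h2 : M * M = (hM.eigenvectorUnitary : Matrix V V ℝ) *
      ((Matrix.diagonal (RCLike.ofReal ∘ hM.eigenvalues) : Matrix V V ℝ) *
       (Matrix.diagonal (RCLike.ofReal ∘ hM.eigenvalues) : Matrix V V ℝ)) *
      star (hM.eigenvectorUnitary : Matrix V V ℝ) := by
    conv_lhs => rw [hM.spectral_theorem]
    calc (hM.eigenvectorUnitary : Matrix V V ℝ) *
        (Matrix.diagonal (RCLike.ofReal ∘ hM.eigenvalues) : Matrix V V ℝ) *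
        star (hM.eigenvectorUnitary : Matrix V V ℝ) *
        ((hM.eigenvectorUnitary : Matrix V V ℝ) *
        (Matrix.diagonal (RCLike.ofReal ∘ hM.eigenvalues) : Matrix V V ℝ) *
        star (hM.eigenvectorUnitary : Matrix V V ℝ))
        = (hM.eigenvectorUnitary : Matrix V V ℝ) *
          ((Matrix.diagonal (RCLike.ofReal ∘ hM.eigenvalues) : Matrix V V ℝ) *
           ((star (hM.eigenvectorUnitary : Matrix V V ℝ) * (hM.eigenvectorUnitary : Matrix V V ℝ)) *
           (Matrix.diagonal (RCLike.ofReal ∘ hM.eigenvalues) : Matrix V V ℝ))) *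
          star (hM.eigenvectorUnitary : Matrix V V ℝ) := by
          simp only [mul_assoc]
    _ = _ := by rw [h1, one_mul]
  rw [h2, Matrix.trace_mul_cycle, h1, one_mul,
    Matrix.diagonal_mul_diagonal, Matrix.trace_diagonal]
  simp [pow_two]



noncomputable def cf (q : ℕ) (a b : Fin q) : ℝ := if a = b then 0 else 1

lemma cf_comm {q : ℕ} (a b : Fin q) : cf q a b = cf q b a := by
  unfold cf; by_cases h : a = b <;> simp [h, Ne.symm, eq_comm]

lemma hammingDist_cast {n q : ℕ} (x y : Fin n → Fin q) :
    (hammingDist x y : ℝ) = ∑ i, cf q (x i) (y i) := by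
  unfold hammingDist cf
  rw [card_filter]
  push_cast
  exact Finset.sum_congr rfl fun i _ => by by_cases h : x i = y i <;> simp [h]

lemma sum_eval {n q : ℕ} (i : Fin n) (h : Fin q → ℝ) :
    ∑ z : Fin n → Fin q, h (z i) = (q : ℝ) ^ (n - 1) * ∑ a, h a := by
  have key := Fintype.prod_sum (fun (k : Fin n) (a : Fin q) => if k = i then h a else (1 : ℝ))
  have lhs : ∀ z : Fin n → Fin q, (∏ k, if k = i then h (z k) else (1:ℝ)) = h (z i) := by
    intro z
    rw [Finset.prod_ite_eq' univ i (fun k => h (z k))]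
    simp
  have rhs : (∏ k : Fin n, ∑ a : Fin q, if k = i then h a else (1:ℝ))
      = (q : ℝ) ^ (n - 1) * ∑ a, h a := by
    rw [← Finset.mul_prod_erase univ _ (mem_univ i)]
    simp only [if_pos rfl]
    have : ∀ k ∈ univ.erase i, (∑ a : Fin q, if k = i then h a else (1:ℝ)) = (q : ℝ) := by
      intro k hk
      simp [(mem_erase.mp hk).1]
    rw [Finset.prod_congr rfl this, Finset.prod_const, card_erase_of_mem (mem_univ i)]
    simp [mul_comm, Fintype.card_fin]
  calc ∑ z : Fin n → Fin q, h (z i) = ∑ z : Fin n → Fin q, ∏ k, if k = i then h (z k) else 1 := by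
        exact Finset.sum_congr rfl fun z _ => (lhs z).symm
  _ = ∏ k : Fin n, ∑ a : Fin q, if k = i then h a else 1 := key.symm
  _ = _ := rhs

lemma sum_eval2 {n q : ℕ} {i j : Fin n} (hij : i ≠ j) (h₁ h₂ : Fin q → ℝ) :
    ∑ z : Fin n → Fin q, h₁ (z i) * h₂ (z j)
      = (q : ℝ) ^ (n - 2) * ((∑ a, h₁ a) * ∑ a, h₂ a) := by
  have hj : j ∈ univ.erase i := mem_erase.mpr ⟨hij.symm, mem_univ j⟩
  have key := Fintype.prod_sum
    (fun (k : Fin n) (a : Fin q) => if k = i then h₁ a else if k = j then h₂ a else (1 : ℝ))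
  have lhs : ∀ z : Fin n → Fin q,
      (∏ k, if k = i then h₁ (z k) else if k = j then h₂ (z k) else (1:ℝ))
        = h₁ (z i) * h₂ (z j) := by
    intro z
    rw [← Finset.mul_prod_erase univ _ (mem_univ i), if_pos rfl,
      ← Finset.mul_prod_erase _ _ hj, if_neg hij.symm, if_pos rfl]
    have : ∀ k ∈ (univ.erase i).erase j,
        (if k = i then h₁ (z k) else if k = j then h₂ (z k) else (1:ℝ)) = 1 := by
      intro k hk
      rw [if_neg (mem_erase.mp (mem_erase.mp hk).2).1, if_neg (mem_erase.mp hk).1]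
    rw [Finset.prod_congr rfl this, Finset.prod_const_one, mul_one]
  have hcard : ((univ.erase i).erase j).card = n - 2 := by
    rw [card_erase_of_mem hj, card_erase_of_mem (mem_univ i)]
    simp only [card_univ, Fintype.card_fin]
    omega
  have rhs : (∏ k : Fin n, ∑ a : Fin q, if k = i then h₁ a else if k = j then h₂ a else (1:ℝ))
      = (q : ℝ) ^ (n - 2) * ((∑ a, h₁ a) * ∑ a, h₂ a) := by
    rw [← Finset.mul_prod_erase univ _ (mem_univ i), ← Finset.mul_prod_erase _ _ hj]
    simp only [if_pos rfl, if_neg hij.symm]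
    have : ∀ k ∈ (univ.erase i).erase j,
        (∑ a : Fin q, if k = i then h₁ a else if k = j then h₂ a else (1:ℝ)) = (q : ℝ) := by
      intro k hk
      rw [Finset.sum_congr rfl fun a _ => by
        rw [if_neg (mem_erase.mp (mem_erase.mp hk).2).1, if_neg (mem_erase.mp hk).1]]
      simp
    rw [Finset.prod_congr rfl this, Finset.prod_const, hcard]
    simp only [if_pos rfl, if_neg hij.symm, if_true]
    ring
  calc ∑ z : Fin n → Fin q, h₁ (z i) * h₂ (z j)
      = ∑ z : Fin n → Fin q, ∏ k, if k = i then h₁ (z k) else if k = j then h₂ (z k) else 1 :=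
        Finset.sum_congr rfl fun z _ => (lhs z).symm
  _ = ∏ k : Fin n, ∑ a : Fin q, if k = i then h₁ a else if k = j then h₂ a else 1 := key.symm
  _ = _ := rhs

lemma sum_cf {q : ℕ} (b : Fin q) : ∑ a, cf q b a = (q : ℝ) - 1 := by
  unfold cf
  have hp : ∀ a : Fin q, (if b = a then (0:ℝ) else 1) = 1 - (if b = a then 1 else 0) := by
    intro a; by_cases h : b = a <;> simp [h]
  rw [Finset.sum_congr rfl fun a _ => hp a, Finset.sum_sub_distrib, Finset.sum_const,
    Finset.sum_ite_eq univ b (fun _ => (1:ℝ))]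
  simp [Finset.card_univ]

lemma sum_cf_mul {q : ℕ} (u v : Fin q) :
    ∑ a, cf q u a * cf q v a = ((q : ℝ) - 1) - cf q u v := by
  by_cases h : u = v
  · subst h
    have hp : ∀ a, cf q u a * cf q u a = cf q u a := by
      intro a; unfold cf; by_cases h : u = a <;> simp [h]
    rw [Finset.sum_congr rfl fun a _ => hp a, sum_cf]
    simp [cf]
  · have hp : ∀ a, cf q u a * cf q v a
        = 1 - (if u = a then (1:ℝ) else 0) - (if v = a then (1:ℝ) else 0) := by
      intro a; unfold cf
      by_cases h1 : u = a <;> by_cases h2 : v = a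
      · exact absurd (h1.trans h2.symm) h
      · simp [h1, h2]
      · simp [h1, h2]
      · simp [h1, h2]
    rw [Finset.sum_congr rfl fun a _ => hp a, Finset.sum_sub_distrib, Finset.sum_sub_distrib,
      Finset.sum_const, Finset.sum_ite_eq univ u (fun _ => (1:ℝ)),
      Finset.sum_ite_eq univ v (fun _ => (1:ℝ))]
    simp [Finset.card_univ, cf, h]

lemma rowsum {n q : ℕ} (x : Fin n → Fin q) :
    ∑ z : Fin n → Fin q, (hammingDist x z : ℝ)
      = (n : ℝ) * (q : ℝ) ^ (n - 1) * ((q : ℝ) - 1) := by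
  simp_rw [hammingDist_cast]
  rw [Finset.sum_comm]
  rw [Finset.sum_congr rfl fun i _ => by
    rw [sum_eval i (cf q (x i)), sum_cf (x i)]]
  rw [Finset.sum_const, card_univ, Fintype.card_fin, nsmul_eq_mul]
  ring

lemma dsq {n q : ℕ} (hn : 1 ≤ n) (x y : Fin n → Fin q) :
    ∑ z : Fin n → Fin q, (hammingDist x z : ℝ) * (hammingDist z y : ℝ)
      = -(q : ℝ) ^ (n - 1) * (hammingDist x y : ℝ)
        + ((n : ℝ) * (q : ℝ) ^ (n - 1) * ((q : ℝ) - 1)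
          + (n : ℝ) * ((n : ℝ) - 1) * (q : ℝ) ^ (n - 2) * ((q : ℝ) - 1) ^ 2) := by
  have step1 : ∀ z, (hammingDist x z : ℝ) * (hammingDist z y : ℝ)
      = ∑ i, ∑ j, cf q (x i) (z i) * cf q (y j) (z j) := by
    intro z
    rw [hammingDist_cast, hammingDist_cast, Finset.sum_mul_sum]
    exact Finset.sum_congr rfl fun i _ => Finset.sum_congr rfl fun j _ => by
      rw [cf_comm (z j) (y j)]
  rw [Finset.sum_congr rfl fun z _ => step1 z, Finset.sum_comm]
  rw [Finset.sum_congr rfl fun i (_ : i ∈ univ) => Finset.sum_comm]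
  have inner : ∀ i : Fin n, ∑ j, ∑ z : Fin n → Fin q, cf q (x i) (z i) * cf q (y j) (z j)
      = (q:ℝ)^(n-1) * (((q:ℝ)-1) - cf q (x i) (y i))
        + ((n:ℝ) - 1) * ((q:ℝ)^(n-2) * (((q:ℝ)-1) * ((q:ℝ)-1))) := by
    intro i
    rw [← Finset.add_sum_erase univ _ (mem_univ i)]
    congr 1
    · rw [sum_eval i (fun a => cf q (x i) a * cf q (y i) a), sum_cf_mul]
    · rw [Finset.sum_congr rfl (fun j hj => by
        have hji : i ≠ j := Ne.symm (mem_erase.mp hj).1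
        rw [sum_eval2 hji (cf q (x i)) (cf q (y j)), sum_cf, sum_cf]),
        Finset.sum_const, card_erase_of_mem (mem_univ i), card_univ, Fintype.card_fin,
        nsmul_eq_mul]
      congr 1
      push_cast [Nat.cast_sub hn]
      ring
  rw [Finset.sum_congr rfl fun i _ => inner i, Finset.sum_add_distrib, Finset.sum_const,
    card_univ, Fintype.card_fin, nsmul_eq_mul]
  have : ∑ i, (q:ℝ)^(n-1) * (((q:ℝ)-1) - cf q (x i) (y i))
      = (q:ℝ)^(n-1) * ((n:ℝ) * ((q:ℝ)-1) - (hammingDist x y : ℝ)) := by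
    rw [← Finset.mul_sum, Finset.sum_sub_distrib, Finset.sum_const, card_univ,
      Fintype.card_fin, nsmul_eq_mul, hammingDist_cast]
  rw [this]
  ring

lemma distMatrix_hamming_apply {n q : ℕ} (x y : Fin n → Fin q) :
    distMatrix (hammingGraph n q) x y = (hammingDist x y : ℝ) := by
  simp [distMatrix, hammingGraph_dist]

lemma eigen_tri {n q : ℕ} (hn : 1 ≤ n) (i : Fin n → Fin q) :
    (distMatrix_isHermitian (hammingGraph n q)).eigenvalues i
        = (n : ℝ) * (q : ℝ) ^ (n - 1) * ((q : ℝ) - 1)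
    ∨ (distMatrix_isHermitian (hammingGraph n q)).eigenvalues i = -(q : ℝ) ^ (n - 1)
    ∨ (distMatrix_isHermitian (hammingGraph n q)).eigenvalues i = 0 := by
  set hM := distMatrix_isHermitian (hammingGraph n q) with hhM
  set lam := hM.eigenvalues i with hlam
  set v : (Fin n → Fin q) → ℝ := ⇑(hM.eigenvectorBasis i) with hv0
  set lam1 : ℝ := (n : ℝ) * (q : ℝ) ^ (n - 1) * ((q : ℝ) - 1) with hlam1
  set β : ℝ := (q : ℝ) ^ (n - 1) with hβ
  set K : ℝ := (n : ℝ) * (q : ℝ) ^ (n - 1) * ((q : ℝ) - 1)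
      + (n : ℝ) * ((n : ℝ) - 1) * (q : ℝ) ^ (n - 2) * ((q : ℝ) - 1) ^ 2 with hK
  have hv : ∀ x, ∑ z, (hammingDist x z : ℝ) * v z = lam * v x := by
    intro x
    have := congrFun (hM.mulVec_eigenvectorBasis i) x
    simpa [Matrix.mulVec, dotProduct, distMatrix_hamming_apply] using this
  obtain ⟨x₀, hx₀⟩ : ∃ x, v x ≠ 0 := by
    by_contra h
    push_neg at h
    exact hM.eigenvectorBasis.orthonormal.ne_zero i (by ext x; simpa using h x)
  set s : ℝ := ∑ z, v z with hs0
  have h1 : lam * s = lam1 * s := by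
    calc lam * s = ∑ x, lam * v x := by rw [hs0, Finset.mul_sum]
    _ = ∑ x, ∑ z, (hammingDist x z : ℝ) * v z := Finset.sum_congr rfl fun x _ => (hv x).symm
    _ = ∑ z, (∑ x, (hammingDist x z : ℝ)) * v z := by
        rw [Finset.sum_comm]
        exact Finset.sum_congr rfl fun z _ => by rw [Finset.sum_mul]
    _ = ∑ z, lam1 * v z := Finset.sum_congr rfl fun z _ => by
        rw [Finset.sum_congr rfl fun x (_ : x ∈ univ) => by rw [hammingDist_comm x z],
          rowsum z]
    _ = lam1 * s := by rw [hs0, Finset.mul_sum]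
  have h2 : ∀ x, lam * (lam * v x) = -β * (lam * v x) + K * s := by
    intro x
    calc lam * (lam * v x) = lam * ∑ z, (hammingDist x z : ℝ) * v z := by rw [hv x]
    _ = ∑ z, (hammingDist x z : ℝ) * (lam * v z) := by
        rw [Finset.mul_sum]; exact Finset.sum_congr rfl fun z _ => by ring
    _ = ∑ z, (hammingDist x z : ℝ) * ∑ w, (hammingDist z w : ℝ) * v w :=
        Finset.sum_congr rfl fun z _ => by rw [hv z]
    _ = ∑ w, (∑ z, (hammingDist x z : ℝ) * (hammingDist z w : ℝ)) * v w := by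
        simp_rw [Finset.mul_sum, Finset.sum_mul]
        rw [Finset.sum_comm]
        exact Finset.sum_congr rfl fun w _ => Finset.sum_congr rfl fun z _ => by ring
    _ = ∑ w, (-β * (hammingDist x w : ℝ) + K) * v w :=
        Finset.sum_congr rfl fun w _ => by rw [dsq hn x w]
    _ = -β * ∑ w, (hammingDist x w : ℝ) * v w + K * s := by
        rw [hs0, Finset.mul_sum, Finset.mul_sum, ← Finset.sum_add_distrib]
        exact Finset.sum_congr rfl fun w _ => by ring
    _ = -β * (lam * v x) + K * s := by rw [hv x]
  by_cases hs : s = 0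
  · right
    have h2x := h2 x₀
    rw [hs, mul_zero, add_zero] at h2x
    have : (lam + β) * lam * v x₀ = 0 := by linarith [h2x]
    have hll : (lam + β) * lam = 0 := by
      rcases mul_eq_zero.mp this with h | h
      · exact h
      · exact absurd h hx₀
    rcases mul_eq_zero.mp hll with h | h
    · left; linarith
    · right; exact h
  · left
    have := mul_right_cancel₀ hs h1
    exact this

/-- The distance matrix of `H(n,q)` has eigenvalue `n q^{n−1}(q−1)` with
multiplicity `1`, eigenvalue `−q^{n−1}` with multiplicity `n(q−1)`, and eigenvalue `0` with
multiplicity `qⁿ − 1 − n(q−1)`; in particular `n₊ = 1` and `n₋ = n(q−1)`. -/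
theorem hamming_distMatrix_spectrum (n q : ℕ) (hn : 1 ≤ n) (hq : 2 ≤ q) :
    (Finset.univ.filter fun i =>
        (distMatrix_isHermitian (hammingGraph n q)).eigenvalues i =
          (n : ℝ) * (q : ℝ) ^ (n - 1) * ((q : ℝ) - 1)).card = 1 ∧
      (Finset.univ.filter fun i =>
        (distMatrix_isHermitian (hammingGraph n q)).eigenvalues i =
          -(q : ℝ) ^ (n - 1)).card = n * (q - 1) ∧
      (Finset.univ.filter fun i =>
        (distMatrix_isHermitian (hammingGraph n q)).eigenvalues i = 0).card =
          q ^ n - 1 - n * (q - 1) ∧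
      posCount (distMatrix_isHermitian (hammingGraph n q)) = 1 ∧
      negCount (distMatrix_isHermitian (hammingGraph n q)) = n * (q - 1) := by
  classical
  set hM := distMatrix_isHermitian (hammingGraph n q) with hhM
  set lam := hM.eigenvalues with hlamdef
  set lam1 : ℝ := (n : ℝ) * (q : ℝ) ^ (n - 1) * ((q : ℝ) - 1) with hl1
  set β : ℝ := (q : ℝ) ^ (n - 1) with hb
  set K : ℝ := (n : ℝ) * (q : ℝ) ^ (n - 1) * ((q : ℝ) - 1)
      + (n : ℝ) * ((n : ℝ) - 1) * (q : ℝ) ^ (n - 2) * ((q : ℝ) - 1) ^ 2 with hK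
  have hq2 : (2 : ℝ) ≤ (q : ℝ) := by exact_mod_cast hq
  have hn1 : (1 : ℝ) ≤ (n : ℝ) := by exact_mod_cast hn
  have hβpos : 0 < β := by rw [hb]; positivity
  have hl1pos : 0 < lam1 := by
    have hq1 : (0:ℝ) < (q:ℝ) - 1 := by linarith
    have hn0 : (0:ℝ) < (n:ℝ) := by linarith
    rw [hl1]
    exact mul_pos (mul_pos hn0 hβpos) hq1
  have tri : ∀ i, lam i = lam1 ∨ lam i = -β ∨ lam i = 0 := eigen_tri hn
  set A := Finset.univ.filter (fun i => lam i = lam1) with hA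
  set B := Finset.univ.filter (fun i => lam i = -β) with hB
  set C := Finset.univ.filter (fun i => lam i = 0) with hC
  have hAB : Disjoint A (B ∪ C) := by
    rw [Finset.disjoint_left]
    intro i hi hi'
    rw [hA, mem_filter] at hi
    rcases Finset.mem_union.mp hi' with h | h
    · rw [hB, mem_filter] at h
      have : lam1 = -β := hi.2 ▸ h.2
      linarith
    · rw [hC, mem_filter] at h
      have : lam1 = 0 := hi.2 ▸ h.2
      linarith
  have hBC : Disjoint B C := by
    rw [Finset.disjoint_left]
    intro i hi hi'
    rw [hB, mem_filter] at hi
    rw [hC, mem_filter] at hi'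
    have : -β = 0 := hi.2 ▸ hi'.2
    linarith
  have hcover : (Finset.univ : Finset (Fin n → Fin q)) = A ∪ (B ∪ C) := by
    ext i
    simp only [Finset.mem_union, hA, hB, hC, mem_filter, mem_univ, true_and, iff_true]
    simpa using tri i
  have hcardsum : A.card + (B.card + C.card) = q ^ n := by
    rw [← Finset.card_union_of_disjoint hBC, ← Finset.card_union_of_disjoint hAB, ← hcover,
      card_univ]
    simp [Fintype.card_fun]
  have splitsum : ∀ g : (Fin n → Fin q) → ℝ,
      ∑ i, g i = ∑ i ∈ A, g i + (∑ i ∈ B, g i + ∑ i ∈ C, g i) := by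
    intro g
    conv_lhs => rw [hcover]
    rw [Finset.sum_union hAB, Finset.sum_union hBC]
  have hsum0 : ∑ i, lam i = 0 := by
    rw [hlamdef, ← trace_eq_sum_eigen hM]
    simp [Matrix.trace, Matrix.diag, distMatrix_hamming_apply, hammingDist_self]
  have hsumsq : ∑ i, lam i ^ 2 = (q : ℝ) ^ n * K := by
    rw [hlamdef, ← trace_sq_eq_sum_eigen_sq hM]
    have hdiag : ∀ x, ((distMatrix (hammingGraph n q)) * (distMatrix (hammingGraph n q))) x x
        = K := by
      intro x
      rw [Matrix.mul_apply]
      simp only [distMatrix_hamming_apply]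
      rw [dsq hn x x]
      simp [hammingDist_self, hK]
    rw [Matrix.trace]
    have : ∀ x ∈ (Finset.univ : Finset (Fin n → Fin q)),
        ((distMatrix (hammingGraph n q)) * (distMatrix (hammingGraph n q))).diag x = K := by
      intro x _
      rw [Matrix.diag_apply]
      exact hdiag x
    rw [Finset.sum_congr rfl this, Finset.sum_const, card_univ, Fintype.card_fun, nsmul_eq_mul]
    push_cast
    simp
  have sA : ∑ i ∈ A, lam i = (A.card : ℝ) * lam1 := by
    have h : ∑ i ∈ A, lam i = ∑ _i ∈ A, lam1 := Finset.sum_congr rfl fun i hi => by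
      rw [hA, mem_filter] at hi; exact hi.2
    rw [h, Finset.sum_const, nsmul_eq_mul]
  have sB : ∑ i ∈ B, lam i = (B.card : ℝ) * (-β) := by
    have h : ∑ i ∈ B, lam i = ∑ _i ∈ B, (-β) := Finset.sum_congr rfl fun i hi => by
      rw [hB, mem_filter] at hi; exact hi.2
    rw [h, Finset.sum_const, nsmul_eq_mul]
  have sC : ∑ i ∈ C, lam i = 0 := by
    have h : ∑ i ∈ C, lam i = ∑ _i ∈ C, (0:ℝ) := Finset.sum_congr rfl fun i hi => by
      rw [hC, mem_filter] at hi; exact hi.2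
    rw [h, Finset.sum_const, smul_zero]
  have sA2 : ∑ i ∈ A, lam i ^ 2 = (A.card : ℝ) * lam1 ^ 2 := by
    have h : ∑ i ∈ A, lam i ^ 2 = ∑ _i ∈ A, lam1 ^ 2 := Finset.sum_congr rfl fun i hi => by
      rw [hA, mem_filter] at hi; rw [hi.2]
    rw [h, Finset.sum_const, nsmul_eq_mul]
  have sB2 : ∑ i ∈ B, lam i ^ 2 = (B.card : ℝ) * β ^ 2 := by
    have h : ∑ i ∈ B, lam i ^ 2 = ∑ _i ∈ B, β ^ 2 := Finset.sum_congr rfl fun i hi => by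
      rw [hB, mem_filter] at hi; rw [hi.2]; ring
    rw [h, Finset.sum_const, nsmul_eq_mul]
  have sC2 : ∑ i ∈ C, lam i ^ 2 = 0 := by
    have h : ∑ i ∈ C, lam i ^ 2 = ∑ _i ∈ C, (0:ℝ) := Finset.sum_congr rfl fun i hi => by
      rw [hC, mem_filter] at hi; rw [hi.2]; ring
    rw [h, Finset.sum_const, smul_zero]
  have e0 : (A.card : ℝ) * lam1 - (B.card : ℝ) * β = 0 := by
    have := hsum0
    rw [splitsum lam, sA, sB, sC] at this
    linarith
  have e2 : (A.card : ℝ) * lam1 ^ 2 + (B.card : ℝ) * β ^ 2 = (q : ℝ) ^ n * K := by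
    have := hsumsq
    rw [splitsum (fun i => lam i ^ 2), sA2, sB2, sC2] at this
    linarith
  have hX : (q : ℝ) ^ n * K = lam1 * (lam1 + β) := by
    rw [hl1, hb, hK]
    obtain ⟨m, rfl⟩ : ∃ m, n = m + 1 := ⟨n - 1, by omega⟩
    cases m with
    | zero => norm_num; ring
    | succ k =>
      simp only [Nat.add_sub_cancel, show k + 1 + 1 - 2 = k by omega]
      push_cast
      rw [pow_succ, pow_succ]
      ring
  have hbb : (B.card : ℝ) * β = (A.card : ℝ) * lam1 := by linarith
  have hXpos : 0 < lam1 * (lam1 + β) := by positivity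
  have hAX : (A.card : ℝ) * (lam1 * (lam1 + β)) = 1 * (lam1 * (lam1 + β)) := by
    have hsub : (B.card : ℝ) * β ^ 2 = (A.card : ℝ) * lam1 * β := by
      rw [pow_two, ← mul_assoc, hbb]
    calc (A.card : ℝ) * (lam1 * (lam1 + β))
        = (A.card : ℝ) * lam1 ^ 2 + (A.card : ℝ) * lam1 * β := by ring
    _ = (A.card : ℝ) * lam1 ^ 2 + (B.card : ℝ) * β ^ 2 := by rw [hsub]
    _ = (q : ℝ) ^ n * K := e2
    _ = 1 * (lam1 * (lam1 + β)) := by rw [hX, one_mul]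
  have hAcard : A.card = 1 := by
    have := mul_right_cancel₀ (ne_of_gt hXpos) hAX
    exact_mod_cast this
  have hBr : (B.card : ℝ) * β = ((n : ℝ) * ((q : ℝ) - 1)) * β := by
    rw [hbb, hAcard, hl1]
    push_cast
    ring
  have hBcard : B.card = n * (q - 1) := by
    have h1 : (B.card : ℝ) = (n : ℝ) * ((q : ℝ) - 1) :=
      mul_right_cancel₀ (ne_of_gt hβpos) hBr
    have h2 : ((n * (q - 1) : ℕ) : ℝ) = (n : ℝ) * ((q : ℝ) - 1) := by
      push_cast [Nat.cast_sub (show 1 ≤ q by omega)]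
      ring
    exact_mod_cast h1.trans h2.symm
  have hCcard : C.card = q ^ n - 1 - n * (q - 1) := by omega
  refine ⟨hAcard, hBcard, hCcard, ?_, ?_⟩
  · show (Finset.univ.filter fun i => 0 < lam i).card = 1
    have : (Finset.univ.filter fun i => 0 < lam i) = A := by
      ext i
      rw [hA]
      simp only [mem_filter, mem_univ, true_and]
      constructor
      · intro h
        rcases tri i with h' | h' | h'
        · exact h'
        · rw [h'] at h; linarith
        · rw [h'] at h; linarith
      · intro h; rw [h]; exact hl1pos
    rw [this, hAcard]
  · show (Finset.univ.filter fun i => lam i < 0).card = n * (q - 1)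
    have : (Finset.univ.filter fun i => lam i < 0) = B := by
      ext i
      rw [hB]
      simp only [mem_filter, mem_univ, true_and]
      constructor
      · intro h
        rcases tri i with h' | h' | h'
        · rw [h'] at h; linarith
        · exact h'
        · rw [h'] at h; linarith
      · intro h; rw [h]; linarith
    rw [this, hBcard]
end

section
/- Let n ≥ 4 and let D be the distance matrix of the triangular graph Tₙ. Then the eigenvalues of D are: (n−1)(n−2) with multiplicity 1, −(n−2) with multiplicity n−1, and 0 with multiplicity C(n,2) − n, where C(n,2) = n(n−1)/2. -/
/-- The triangular graph `Tₙ`, the line graph of `Kₙ`: vertices are the 2-element subsets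
of an `n`-element set, adjacent iff they intersect. -/
def triangularGraph (n : ℕ) : SimpleGraph {s : Finset (Fin n) // s.card = 2} where
  Adj a b := a ≠ b ∧ (a.1 ∩ b.1).Nonempty
  symm := ⟨by
    rintro a b ⟨h1, h2⟩
    exact ⟨h1.symm, by rwa [Finset.inter_comm]⟩⟩
  loopless := ⟨by rintro a ⟨h1, _⟩; exact h1 rfl⟩

/-!
Two vertices `u, v` of `Tₙ` are at distance `2 - |u ∩ v|`, so `D = 2J - NᵀN`, where `J` is the
all-ones matrix and `N` the point–pair incidence matrix of `Kₙ`. Since `NNᵀ = (n - 2)I + J` and `N` has row sums `n - 1` and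
column sums `2`, one gets `D² + (n - 2)D = 2(n - 2)²J` and `DJ = (n - 1)(n - 2)J`; hence `D` is
annihilated by `x (x + n - 2) (x - (n - 1)(n - 2))`. The multiplicities of these three roots are
then forced by the number of vertices, `tr D = 0` and `tr D² = n(n - 1)(n - 2)²`.
-/

open Finset Matrix Polynomial

theorem Fintype.sum_comp_eq_sum_card_fiber_smul {ι α M : Type*} [Fintype ι] [DecidableEq α]
    [AddCommMonoid M] {f : ι → α} {t : Finset α} (hf : ∀ i, f i ∈ t) (g : α → M) :
    ∑ i, g (f i) = ∑ y ∈ t, #{i | f i = y} • g y := by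
  rw [← sum_fiberwise_of_maps_to' (fun i _ ↦ hf i)]
  simp

namespace Matrix

theorem of_one_mul_of_one {α β γ R : Type*} [Fintype β] [NonAssocSemiring R] :
    (of 1 : Matrix α β R) * (of 1 : Matrix β γ R) = (Fintype.card β : R) • of 1 := by
  ext
  simp [mul_apply]

namespace IsHermitian

variable {𝕜 ι : Type*} [RCLike 𝕜] [Fintype ι] [DecidableEq ι] {A : Matrix ι ι 𝕜}

theorem trace_mul_self_eq_sum_sq_eigenvalues (hA : A.IsHermitian) :
    (A * A).trace = ∑ i, ((hA.eigenvalues i ^ 2 : ℝ) : 𝕜) := by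
  conv_lhs => rw [hA.spectral_theorem, ← map_mul, Unitary.conjStarAlgAut_apply, trace_mul_cycle,
    Unitary.coe_star_mul_self, one_mul, diagonal_mul_diagonal, trace_diagonal]
  simp [sq]

theorem eval_eigenvalues_eq_zero {p : ℝ[X]} (hA : A.IsHermitian) (hp : aeval A p = 0) (i : ι) :
    p.eval (hA.eigenvalues i) = 0 := by
  have : Nonempty ι := ⟨i⟩
  simpa [hp, spectrum.zero_eq] using
    spectrum.subset_polynomial_aeval A p ⟨_, hA.eigenvalues_mem_spectrum_real i, rfl⟩

theorem multiplicity_moments_of_eigenvalues_mem {B : Matrix ι ι ℝ} (hB : B.IsHermitian)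
    {a b : ℝ} (hab : a ≠ b) (ha : a ≠ 0) (hb : b ≠ 0)
    (h : ∀ i, hB.eigenvalues i ∈ ({a, b, 0} : Finset ℝ)) :
    #{i | hB.eigenvalues i = a} + #{i | hB.eigenvalues i = b} + #{i | hB.eigenvalues i = 0} =
        Fintype.card ι ∧
      #{i | hB.eigenvalues i = a} * a + #{i | hB.eigenvalues i = b} * b = B.trace ∧
      #{i | hB.eigenvalues i = a} * a ^ 2 + #{i | hB.eigenvalues i = b} * b ^ 2 =
        (B * B).trace := by
  have hsum (g : ℝ → ℝ) : ∑ i, g (hB.eigenvalues i) = #{i | hB.eigenvalues i = a} • g a +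
      #{i | hB.eigenvalues i = b} • g b + #{i | hB.eigenvalues i = 0} • g 0 := by
    rw [Fintype.sum_comp_eq_sum_card_fiber_smul h, sum_insert (by simp [hab, ha]), sum_pair hb,
      add_assoc]
  refine ⟨?_, ?_, ?_⟩
  · rw [← card_univ, card_eq_sum_card_fiberwise (s := univ) (fun i _ ↦ h i),
      sum_insert (by simp [hab, ha]), sum_pair hb, add_assoc]
  · simpa [hB.trace_eq_sum_eigenvalues] using (hsum id).symm
  · simp [hB.trace_mul_self_eq_sum_sq_eigenvalues, hsum (· ^ 2)]

end IsHermitian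

end Matrix

namespace triangularGraph

variable {n : ℕ}

theorem adj_iff {u v : {s : Finset (Fin n) // s.card = 2}} :
    (triangularGraph n).Adj u v ↔ u ≠ v ∧ (u.1 ∩ v.1).Nonempty :=
  Iff.rfl

theorem card_inter_eq_two_iff {u v : {s : Finset (Fin n) // s.card = 2}} :
    #(u.1 ∩ v.1) = 2 ↔ u = v := by
  refine ⟨fun h ↦ Subtype.ext ?_, by rintro rfl; simpa using u.2⟩
  exact (eq_of_subset_of_card_le inter_subset_left (by rw [u.2, h])).symm.trans
    (eq_of_subset_of_card_le inter_subset_right (by rw [v.2, h]))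

theorem dist_eq_two_of_disjoint {u v : {s : Finset (Fin n) // s.card = 2}}
    (huv : Disjoint u.1 v.1) : (triangularGraph n).dist u v = 2 := by
  obtain ⟨x, hx⟩ := card_pos.1 (u.2 ▸ two_pos)
  obtain ⟨y, hy⟩ := card_pos.1 (v.2 ▸ two_pos)
  have hxv : x ∉ v.1 := disjoint_left.1 huv hx
  have hyu : y ∉ u.1 := disjoint_right.1 huv hy
  let w : {s : Finset (Fin n) // s.card = 2} :=
    ⟨{x, y}, card_pair (by rintro rfl; exact hxv hy)⟩
  have hw : w ∈ (triangularGraph n).commonNeighbors u v :=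
    ⟨⟨fun h ↦ hyu (by rw [h]; simp [w]), x, by simp [w, hx]⟩,
      ⟨fun h ↦ hxv (by rw [h]; simp [w]), y, by simp [w, hy]⟩⟩
  have hne : u ≠ v := by rintro rfl; exact hxv hx
  have hnadj : ¬ (triangularGraph n).Adj u v := fun h ↦
    not_nonempty_iff_eq_empty.2 (disjoint_iff_inter_eq_empty.1 huv) h.2
  simp [SimpleGraph.dist, SimpleGraph.edist_eq_two_iff.2 ⟨hne, hnadj, w, hw⟩]

theorem dist_eq_two_sub_card_inter (u v : {s : Finset (Fin n) // s.card = 2}) :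
    ((triangularGraph n).dist u v : ℝ) = 2 - #(u.1 ∩ v.1) := by
  by_cases huv : u = v
  · subst huv
    simp [u.2]
  by_cases hint : (u.1 ∩ v.1).Nonempty
  · have hle : #(u.1 ∩ v.1) ≤ 2 := (card_le_card inter_subset_left).trans_eq u.2
    have hne : #(u.1 ∩ v.1) ≠ 2 := mt card_inter_eq_two_iff.1 huv
    have hpos := hint.card_pos
    rw [SimpleGraph.dist_eq_one_iff_adj.2 (adj_iff.2 ⟨huv, hint⟩),
      show #(u.1 ∩ v.1) = 1 by omega]
    norm_num
  · rw [not_nonempty_iff_eq_empty] at hint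
    rw [dist_eq_two_of_disjoint (disjoint_iff_inter_eq_empty.2 hint), hint]
    simp

theorem card_filter_mem (i : Fin n) :
    #{e : {s : Finset (Fin n) // s.card = 2} | i ∈ e.1} = n - 1 := by
  calc #{e : {s : Finset (Fin n) // s.card = 2} | i ∈ e.1}
      = #(univ.erase i) := by
        refine (card_bij (fun j hj ↦ ⟨{i, j}, card_pair (ne_of_mem_erase hj).symm⟩) (by simp)
          (fun j hj k hk h ↦ ?_) (fun e he ↦ ?_)).symm
        · simpa [ne_of_mem_erase hj, eq_comm] using congrArg (j ∈ ·.1) h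
        · have hi : i ∈ e.1 := (mem_filter.1 he).2
          obtain ⟨j, hj⟩ := card_eq_one.1 (by rw [card_erase_of_mem hi, e.2] : #(e.1.erase i) = 1)
          refine ⟨j, mem_erase.2 ⟨ne_of_mem_erase (hj ▸ mem_singleton_self j), mem_univ j⟩, ?_⟩
          exact Subtype.ext ((congrArg (insert i) hj).symm.trans (insert_erase hi))
    _ = n - 1 := by rw [card_erase_of_mem (mem_univ i), card_fin]

theorem card_filter_mem_and_mem {i j : Fin n} (hij : i ≠ j) :
    #{e : {s : Finset (Fin n) // s.card = 2} | i ∈ e.1 ∧ j ∈ e.1} = 1 := by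
  rw [card_eq_one]
  refine ⟨⟨{i, j}, card_pair hij⟩, eq_singleton_iff_unique_mem.2 ⟨by simp, fun e he ↦ ?_⟩⟩
  simp only [mem_filter, mem_univ, true_and] at he
  exact Subtype.ext (eq_of_subset_of_card_le (insert_subset_iff.2 ⟨he.1, by simpa using he.2⟩)
    (by rw [e.2, card_pair hij])).symm

def incMatrix (n : ℕ) : Matrix (Fin n) {s : Finset (Fin n) // s.card = 2} ℝ :=
  of fun i e ↦ if i ∈ e.1 then 1 else 0

theorem incMatrix_mul_transpose_apply (i j : Fin n) :
    (incMatrix n * (incMatrix n)ᵀ) i j =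
      #{e : {s : Finset (Fin n) // s.card = 2} | i ∈ e.1 ∧ j ∈ e.1} := by
  simp only [incMatrix, mul_apply, transpose_apply, of_apply, ite_zero_mul_ite_zero, mul_one,
    sum_boole]

theorem transpose_incMatrix_mul_incMatrix :
    (incMatrix n)ᵀ * incMatrix n = of fun u v ↦ (#(u.1 ∩ v.1) : ℝ) := by
  ext u v
  simp only [incMatrix, mul_apply, transpose_apply, of_apply, ite_zero_mul_ite_zero, mul_one,
    sum_boole, ← mem_inter, filter_mem_eq_inter, univ_inter]

theorem incMatrix_mul_transpose_incMatrix :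
    incMatrix n * (incMatrix n)ᵀ = ((n : ℝ) - 2) • 1 + of 1 := by
  ext i j
  rw [incMatrix_mul_transpose_apply]
  rcases eq_or_ne i j with rfl | hij
  · simp [card_filter_mem, Nat.cast_sub (Fin.pos i : 0 < n)]
    ring
  · simp [card_filter_mem_and_mem hij, hij]

theorem of_one_mul_incMatrix {α : Type*} :
    (of 1 : Matrix α (Fin n) ℝ) * incMatrix n = (2 : ℝ) • of 1 := by
  ext x e
  simp [incMatrix, mul_apply, e.2]

theorem transpose_incMatrix_mul_of_one {α : Type*} :
    (incMatrix n)ᵀ * (of 1 : Matrix (Fin n) α ℝ) = (2 : ℝ) • of 1 := by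
  ext e x
  simp [incMatrix, mul_apply, e.2]

theorem incMatrix_mul_of_one {α : Type*} :
    incMatrix n * (of 1 : Matrix {s : Finset (Fin n) // s.card = 2} α ℝ) =
      ((n : ℝ) - 1) • of 1 := by
  ext i x
  simp [incMatrix, mul_apply, card_filter_mem, Nat.cast_sub (Fin.pos i : 0 < n)]

theorem of_one_mul_transpose_incMatrix {α : Type*} :
    (of 1 : Matrix α {s : Finset (Fin n) // s.card = 2} ℝ) * (incMatrix n)ᵀ =
      ((n : ℝ) - 1) • of 1 := by
  ext x i
  simp [incMatrix, mul_apply, card_filter_mem, Nat.cast_sub (Fin.pos i : 0 < n)]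

theorem distMatrix_eq :
    distMatrix (triangularGraph n) = (2 : ℝ) • of 1 - (incMatrix n)ᵀ * incMatrix n := by
  ext u v
  simp [transpose_incMatrix_mul_incMatrix, distMatrix, dist_eq_two_sub_card_inter]

theorem transpose_incMatrix_mul_incMatrix_mul_self :
    (incMatrix n)ᵀ * incMatrix n * ((incMatrix n)ᵀ * incMatrix n) =
      ((n : ℝ) - 2) • ((incMatrix n)ᵀ * incMatrix n) + (4 : ℝ) • of 1 := by
  rw [Matrix.mul_assoc, ← Matrix.mul_assoc (incMatrix n), incMatrix_mul_transpose_incMatrix,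
    Matrix.add_mul, Matrix.smul_mul, Matrix.one_mul, of_one_mul_incMatrix, Matrix.mul_add,
    Matrix.mul_smul, Matrix.mul_smul, transpose_incMatrix_mul_of_one, smul_smul]
  norm_num

theorem transpose_incMatrix_mul_incMatrix_mul_of_one :
    (incMatrix n)ᵀ * incMatrix n * of 1 = (2 * ((n : ℝ) - 1)) • of 1 := by
  rw [Matrix.mul_assoc, incMatrix_mul_of_one, Matrix.mul_smul, transpose_incMatrix_mul_of_one,
    smul_smul, mul_comm]

theorem of_one_mul_transpose_incMatrix_mul_incMatrix :
    of 1 * ((incMatrix n)ᵀ * incMatrix n) = (2 * ((n : ℝ) - 1)) • of 1 := by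
  rw [← Matrix.mul_assoc, of_one_mul_transpose_incMatrix, Matrix.smul_mul, of_one_mul_incMatrix,
    smul_smul, mul_comm]

theorem card_vertices : Fintype.card {s : Finset (Fin n) // s.card = 2} = n.choose 2 := by
  simp [Fintype.card_finset_len]

theorem distMatrix_mul_self_add_smul :
    distMatrix (triangularGraph n) * distMatrix (triangularGraph n) +
        ((n : ℝ) - 2) • distMatrix (triangularGraph n) = (2 * ((n : ℝ) - 2) ^ 2) • of 1 := by
  simp only [distMatrix_eq, sub_mul, mul_sub, Matrix.smul_mul, Matrix.mul_smul,
    transpose_incMatrix_mul_incMatrix_mul_self, transpose_incMatrix_mul_incMatrix_mul_of_one,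
    of_one_mul_transpose_incMatrix_mul_incMatrix, of_one_mul_of_one, card_vertices,
    Nat.cast_choose_two]
  module

theorem distMatrix_mul_of_one :
    distMatrix (triangularGraph n) * of 1 = (((n : ℝ) - 1) * ((n : ℝ) - 2)) • of 1 := by
  simp only [distMatrix_eq, sub_mul, Matrix.smul_mul, transpose_incMatrix_mul_incMatrix_mul_of_one,
    of_one_mul_of_one, card_vertices, Nat.cast_choose_two]
  module

theorem aeval_distMatrix_eq_zero :
    aeval (distMatrix (triangularGraph n))
      ((X - C (((n : ℝ) - 1) * ((n : ℝ) - 2))) * (X * (X + C ((n : ℝ) - 2)))) = 0 := by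
  rw [map_mul, map_sub, aeval_X, aeval_C, map_mul (aeval _) X, map_add, aeval_X, aeval_C,
    Algebra.algebraMap_eq_smul_one, Algebra.algebraMap_eq_smul_one, mul_add, Matrix.mul_smul,
    mul_one, distMatrix_mul_self_add_smul, Matrix.mul_smul, sub_mul, distMatrix_mul_of_one,
    Matrix.smul_mul, one_mul, sub_self, smul_zero]

theorem eigenvalues_distMatrix_mem (i : {s : Finset (Fin n) // s.card = 2}) :
    (distMatrix_isHermitian (triangularGraph n)).eigenvalues i ∈
      ({((n : ℝ) - 1) * ((n : ℝ) - 2), -((n : ℝ) - 2), 0} : Finset ℝ) := by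
  have hroot := (distMatrix_isHermitian (triangularGraph n)).eval_eigenvalues_eq_zero
    aeval_distMatrix_eq_zero i
  simp only [eval_mul, eval_sub, eval_add, eval_X, eval_C, mul_eq_zero, sub_eq_zero] at hroot
  simp only [mem_insert, mem_singleton]
  grind

theorem trace_distMatrix : (distMatrix (triangularGraph n)).trace = 0 := by
  simp [trace, distMatrix]

theorem trace_distMatrix_mul_self :
    (distMatrix (triangularGraph n) * distMatrix (triangularGraph n)).trace =
      n * ((n : ℝ) - 1) * ((n : ℝ) - 2) ^ 2 := by
  rw [← add_sub_cancel_right (distMatrix _ * distMatrix _) (((n : ℝ) - 2) • distMatrix _),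
    distMatrix_mul_self_add_smul, trace_sub, trace_smul, trace_smul, trace_distMatrix]
  simp [trace, Nat.cast_choose_two]
  ring

theorem multiplicities_eq_of_moments {p q r : ℕ} (hn : 3 ≤ n) (hcard : p + q + r = n.choose 2)
    (htrace : (p : ℝ) * (((n : ℝ) - 1) * ((n : ℝ) - 2)) + q * -((n : ℝ) - 2) = 0)
    (htrace_sq : (p : ℝ) * (((n : ℝ) - 1) * ((n : ℝ) - 2)) ^ 2 + q * (-((n : ℝ) - 2)) ^ 2 =
      n * ((n : ℝ) - 1) * ((n : ℝ) - 2) ^ 2) :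
    p = 1 ∧ q = n - 1 ∧ r = n.choose 2 - n := by
  have hn' : (3 : ℝ) ≤ n := by exact_mod_cast hn
  have hn2 : (0 : ℝ) < n - 2 := by linarith
  have hq : (q : ℝ) = ((n : ℝ) - 1) * p :=
    mul_left_cancel₀ hn2.ne' (by linear_combination -htrace)
  have hp : (p : ℝ) = 1 := by
    refine mul_left_cancel₀
      (mul_pos (mul_pos (by linarith : (0 : ℝ) < n) (by linarith : (0 : ℝ) < n - 1))
        (pow_pos hn2 2)).ne' ?_
    linear_combination htrace_sq - ((n : ℝ) - 2) ^ 2 * hq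
  have hp' : p = 1 := by exact_mod_cast hp
  have hq' : q + 1 = n := by exact_mod_cast (by rw [hq, hp]; ring : (q : ℝ) + 1 = n)
  omega

end triangularGraph

/-- For `n ≥ 4`, the distance matrix of `Tₙ` has eigenvalue `(n−1)(n−2)` with
multiplicity `1`, eigenvalue `−(n−2)` with multiplicity `n−1`, and eigenvalue `0` with
multiplicity `C(n,2) − n`. -/
theorem triangular_distMatrix_spectrum (n : ℕ) (hn : 4 ≤ n) :
    (Finset.univ.filter fun i =>
        (distMatrix_isHermitian (triangularGraph n)).eigenvalues i =
          ((n : ℝ) - 1) * ((n : ℝ) - 2)).card = 1 ∧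
      (Finset.univ.filter fun i =>
        (distMatrix_isHermitian (triangularGraph n)).eigenvalues i =
          -((n : ℝ) - 2)).card = n - 1 ∧
      (Finset.univ.filter fun i =>
        (distMatrix_isHermitian (triangularGraph n)).eigenvalues i = 0).card =
          n.choose 2 - n := by
  have hn' : (4 : ℝ) ≤ n := by exact_mod_cast hn
  obtain ⟨hcard, htrace, htrace_sq⟩ :=
    (distMatrix_isHermitian (triangularGraph n)).multiplicity_moments_of_eigenvalues_mem
      (by nlinarith) (by nlinarith) (by linarith) triangularGraph.eigenvalues_distMatrix_mem
  rw [triangularGraph.card_vertices] at hcard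
  rw [triangularGraph.trace_distMatrix] at htrace
  rw [triangularGraph.trace_distMatrix_mul_self] at htrace_sq
  exact triangularGraph.multiplicities_eq_of_moments (by omega) hcard htrace htrace_sq
end
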